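/- arXiv:2205.01365 — 4 statements merged into one kernel-verified Lean document; each statement's English description precedes it below -/
import Mathlib

section
/- Let B be a saturated DBA built on top of the prefix-classifier of the objective W it recognizes (distinct states are inequivalent for ∼), with total prefix preorder on states. Then W is progress-consistent if and only if for all states q, q' with q ≺ q', no nonempty word w simultaneously satisfies δ*(q, w) = q' and w ∈ SafeCycles(q'). -/
/-- Concatenate a finite word in front of an infinite word. -/
def extWord {C : Type} (w : List C) (s : ℕ → C) : ℕ → C :=
  fun n => if h : n < w.length then w.get ⟨n, h⟩ else s (n - w.length)

/-- Winning continuations `w⁻¹W` of a finite word `w` w.r.t. objective `W`. -/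
def winCont {C : Type} (W : Set (ℕ → C)) (w : List C) : Set (ℕ → C) :=
  {s | extWord w s ∈ W}

/-- The periodic infinite word `w^ω` for a nonempty finite word `w`. -/
def periodicW {C : Type} (w : List C) (h : w ≠ []) : ℕ → C :=
  fun n => w.get ⟨n % w.length, Nat.mod_lt n (List.length_pos_iff.mpr h)⟩

/-- Progress-consistency: whenever `w₁ ≺ w₁w₂`, the word `w₁(w₂)^ω` is winning. -/
def ProgressConsistent {C : Type} (W : Set (ℕ → C)) : Prop :=
  ∀ (w₁ w₂ : List C) (h : w₂ ≠ []),
    winCont W w₁ ⊂ winCont W (w₁ ++ w₂) → extWord w₁ (periodicW w₂ h) ∈ W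

/-- The run of a deterministic automaton from state `q` on infinite word `s`. -/
def dbaRun {C Q : Type} (δ : Q → C → Q) (q : Q) (s : ℕ → C) : ℕ → Q
  | 0 => q
  | n + 1 => δ (dbaRun δ q s n) (s n)

/-- The set of infinite words accepted (Büchi condition on transitions `acc`) from state `q`. -/
def accFrom {C Q : Type} (δ : Q → C → Q) (acc : Q → C → Prop) (q : Q) : Set (ℕ → C) :=
  {s | ∀ N, ∃ n ≥ N, acc (dbaRun δ q s n) (s n)}

/-- Extension `δ*` of the transition function to finite words. -/
def dstar {C Q : Type} (δ : Q → C → Q) (q : Q) (w : List C) : Q := w.foldl δ q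

/-- `Safe(q)`: finite words whose run from `q` takes no Büchi transition. -/
def safeWords {C Q : Type} (δ : Q → C → Q) (acc : Q → C → Prop) (q : Q) : Set (List C) :=
  {w | ∀ (i : ℕ) (h : i < w.length), ¬ acc (dstar δ q (w.take i)) (w.get ⟨i, h⟩)}

/-- `SafeCycles(q)`: α-free words from `q` that return to `q`. -/
def safeCycles {C Q : Type} (δ : Q → C → Q) (acc : Q → C → Prop) (q : Q) : Set (List C) :=
  {w | w ∈ safeWords δ acc q ∧ dstar δ q w = q}

/-- A DBA is saturated if no strictly larger set of Büchi transitions recognizes the same language. -/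
def Saturated {C Q : Type} (δ : Q → C → Q) (acc : Q → C → Prop) (qinit : Q) : Prop :=
  ∀ acc' : Q → C → Prop, (∀ q c, acc q c → acc' q c) → acc' ≠ acc →
    accFrom δ acc' qinit ≠ accFrom δ acc qinit

namespace Stmt13Aux
variable {C Q : Type}

lemma dstar_append (δ : Q → C → Q) (q : Q) (x y : List C) :
    dstar δ q (x ++ y) = dstar δ (dstar δ q x) y := List.foldl_append

lemma dstar_take_succ (δ : Q → C → Q) (q : Q) (x : List C) (j : ℕ) (h : j < x.length) :
    dstar δ q (x.take (j+1)) = δ (dstar δ q (x.take j)) (x.get ⟨j, h⟩) := by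
  rw [List.take_succ, dstar_append]
  simp [dstar, List.getElem?_eq_getElem h]

lemma extWord_lt {w : List C} {s : ℕ → C} {n : ℕ} (h : n < w.length) :
    extWord w s n = w.get ⟨n, h⟩ := dif_pos h

lemma extWord_add (w : List C) (s : ℕ → C) (n : ℕ) : extWord w s (w.length + n) = s n := by
  have : ¬ (w.length + n < w.length) := by omega
  simp only [extWord, dif_neg this]
  congr 1
  omega

lemma run_take (δ : Q → C → Q) (q : Q) (x : List C) (s : ℕ → C) :
    ∀ j, j ≤ x.length → dbaRun δ q (extWord x s) j = dstar δ q (x.take j)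
  | 0, _ => rfl
  | j+1, h => by
    have hj : j < x.length := h
    rw [dbaRun, run_take δ q x s j (le_of_lt hj), extWord_lt hj, dstar_take_succ δ q x j hj]

lemma run_shift (δ : Q → C → Q) (q : Q) (x : List C) (s : ℕ → C) :
    ∀ n, dbaRun δ q (extWord x s) (x.length + n) = dbaRun δ (dstar δ q x) s n
  | 0 => by
    have := run_take δ q x s x.length le_rfl
    simp [List.take_length] at this
    exact this
  | n+1 => by
    rw [show x.length + (n+1) = (x.length + n) + 1 from rfl, dbaRun,
      run_shift δ q x s n, extWord_add, dbaRun]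

lemma mem_accFrom_ext (δ : Q → C → Q) (acc : Q → C → Prop) (q : Q) (x : List C) (s : ℕ → C) :
    extWord x s ∈ accFrom δ acc q ↔ s ∈ accFrom δ acc (dstar δ q x) := by
  constructor
  · intro h N
    obtain ⟨n, hn, ha⟩ := h (x.length + N)
    refine ⟨n - x.length, by omega, ?_⟩
    have he : n = x.length + (n - x.length) := by omega
    rw [he, run_shift, extWord_add] at ha
    exact ha
  · intro h N
    obtain ⟨m, hm, ha⟩ := h N
    exact ⟨x.length + m, by omega, by rwa [run_shift, extWord_add]⟩

lemma extWord_periodic (x : List C) (h : x ≠ []) :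
    extWord x (periodicW x h) = periodicW x h := by
  funext n
  by_cases hn : n < x.length
  · rw [extWord_lt hn]
    simp [periodicW, Nat.mod_eq_of_lt hn]
  · push_neg at hn
    have h' : ¬ (n < x.length) := by omega
    simp only [extWord, dif_neg h', periodicW]
    have e : (n - x.length) % x.length = n % x.length := (Nat.mod_eq_sub_mod hn).symm
    simp [e]

lemma run_cycle (δ : Q → C → Q) (p : Q) (x : List C) (s : ℕ → C) (hs : extWord x s = s)
    (hc : dstar δ p x = p) : ∀ m n, dbaRun δ p s (m * x.length + n) = dbaRun δ p s n
  | 0, n => by simp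
  | m+1, n => by
    have he : (m+1) * x.length + n = x.length + (m * x.length + n) := by ring
    rw [he]
    conv_lhs => rw [← hs]
    rw [run_shift, hc, run_cycle δ p x s hs hc m n]

lemma run_iter (δ : Q → C → Q) (x : List C) (s : ℕ → C) (hs : extWord x s = s) :
    ∀ (q : Q) (m n : ℕ), dbaRun δ q s (m * x.length + n) =
      dbaRun δ ((fun r => dstar δ r x)^[m] q) s n
  | q, 0, n => by simp
  | q, m+1, n => by
    have he : (m+1) * x.length + n = x.length + (m * x.length + n) := by ring
    rw [he]
    conv_lhs => rw [← hs]
    rw [run_shift, run_iter δ x s hs (dstar δ q x) m n, Function.iterate_succ_apply]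

lemma accFrom_mono (δ : Q → C → Q) (acc : Q → C → Prop) {q q' : Q}
    (h : accFrom δ acc q ⊆ accFrom δ acc q') (x : List C) :
    accFrom δ acc (dstar δ q x) ⊆ accFrom δ acc (dstar δ q' x) := fun s hs =>
  (mem_accFrom_ext δ acc q' x s).mp (h ((mem_accFrom_ext δ acc q x s).mpr hs))

lemma winCont_eq (δ : Q → C → Q) (acc : Q → C → Prop) (qinit : Q) (W : Set (ℕ → C))
    (hW : accFrom δ acc qinit = W) (x : List C) :
    winCont W x = accFrom δ acc (dstar δ qinit x) := by
  ext s
  rw [winCont, Set.mem_setOf_eq, ← hW, mem_accFrom_ext]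

lemma safe_append (δ : Q → C → Q) (acc : Q → C → Prop) (p : Q) (x y : List C)
    (hx : x ∈ safeWords δ acc p) (hy : y ∈ safeWords δ acc (dstar δ p x)) :
    x ++ y ∈ safeWords δ acc p := by
  intro i h hacc
  by_cases hi : i < x.length
  · have h1 : (x ++ y).take i = x.take i := List.take_append_of_le_length (le_of_lt hi)
    have h2 : (x ++ y).get ⟨i, h⟩ = x.get ⟨i, hi⟩ := by
      simp [List.get_eq_getElem, List.getElem_append_left hi]
    rw [h1, h2] at hacc
    exact hx i hi hacc
  · push_neg at hi
    have hj : i - x.length < y.length := by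
      have := h; simp only [List.length_append] at this; omega
    have h1 : (x ++ y).take i = x ++ y.take (i - x.length) := by
      have he : i = x.length + (i - x.length) := by omega
      conv_lhs => rw [he, List.take_append]
      simp
    have h2 : (x ++ y).get ⟨i, h⟩ = y.get ⟨i - x.length, hj⟩ := by
      simp [List.get_eq_getElem, List.getElem_append_right hi]
    rw [h1, h2, dstar_append] at hacc
    exact hy (i - x.length) hj hacc

end Stmt13Aux

open Stmt13Aux
/-- for a saturated DBA built on top of the prefix-classifier (all states
reachable, distinct states inequivalent) with totally preordered states, recognizing `W`:
`W` is progress-consistent iff for all states `q ≺ q'`, no nonempty word both maps `q` to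
`q'` and is an α-free cycle on `q'`. -/
theorem stmt13 {C Q : Type} [Fintype Q] (qinit : Q) (δ : Q → C → Q) (acc : Q → C → Prop)
    (W : Set (ℕ → C)) (hW : accFrom δ acc qinit = W)
    (hreach : ∀ q : Q, ∃ w : List C, dstar δ qinit w = q)
    (hsat : Saturated δ acc qinit)
    (hclass : ∀ q q' : Q, accFrom δ acc q = accFrom δ acc q' → q = q')
    (htot : ∀ q q' : Q, accFrom δ acc q ⊆ accFrom δ acc q' ∨
      accFrom δ acc q' ⊆ accFrom δ acc q) :
    ProgressConsistent W ↔
      ∀ q q' : Q, accFrom δ acc q ⊂ accFrom δ acc q' →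
        ¬ ∃ w : List C, w ≠ [] ∧ dstar δ q w = q' ∧ w ∈ safeCycles δ acc q' := by
  constructor
  · -- PC → no nonempty safe cycle above
    rintro hPC q q' hlt ⟨w, hne, hqw, hsafe, hcyc⟩
    obtain ⟨u, hu⟩ := hreach q
    have hwin : winCont W u ⊂ winCont W (u ++ w) := by
      rw [winCont_eq δ acc qinit W hW u, winCont_eq δ acc qinit W hW (u ++ w),
        dstar_append, hu, hqw]
      exact hlt
    have hmem := hPC u w hne hwin
    rw [← hW] at hmem
    have hs : periodicW w hne ∈ accFrom δ acc q := by
      rw [← hu]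
      exact (mem_accFrom_ext δ acc qinit u _).mp hmem
    set s := periodicW w hne with hsdef
    have hfix : extWord w s = s := extWord_periodic w hne
    have hL : 0 < w.length := List.length_pos_iff.mpr hne
    obtain ⟨n, hn, ha⟩ := hs w.length
    set m := n - w.length with hm
    have hnm : n = w.length + m := by omega
    rw [hnm] at ha
    have hdm := Nat.div_add_mod m w.length
    have hlt' : m % w.length < w.length := Nat.mod_lt m hL
    have e1 : dbaRun δ q s (w.length + m) = dbaRun δ q' s m := by
      conv_lhs => rw [← hfix]
      rw [run_shift, hqw]
    have e2 : dbaRun δ q' s m = dbaRun δ q' s (m % w.length) := by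
      conv_lhs => rw [← hdm, mul_comm]
      exact run_cycle δ q' w s hfix hcyc (m / w.length) (m % w.length)
    have e3 : dbaRun δ q' s (m % w.length) = dstar δ q' (w.take (m % w.length)) := by
      conv_lhs => rw [← hfix]
      exact run_take δ q' w s _ (le_of_lt hlt')
    have e4 : s (w.length + m) = w.get ⟨m % w.length, hlt'⟩ := by
      have e : (w.length + m) % w.length = m % w.length := Nat.add_mod_left _ _
      simp [hsdef, periodicW, e]
    rw [e1, e2, e3, e4] at ha
    exact hsafe _ hlt' ha
  · -- no safe cycles above → PC
    intro H w₁ w₂ hne hsub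
    set q := dstar δ qinit w₁ with hq
    set q' := dstar δ qinit (w₁ ++ w₂) with hq'
    have hq'2 : dstar δ q w₂ = q' := by rw [hq', dstar_append]
    have hlt : accFrom δ acc q ⊂ accFrom δ acc q' := by
      rw [winCont_eq δ acc qinit W hW w₁, winCont_eq δ acc qinit W hW (w₁ ++ w₂)] at hsub
      exact hsub
    set φ : Q → Q := fun r => dstar δ r w₂ with hφ
    set F : ℕ → Q := fun m => φ^[m] q with hF
    have hF0 : F 0 = q := rfl
    have hF1 : F 1 = q' := hq'2
    have hFsucc : ∀ m, F (m+1) = dstar δ (F m) w₂ := fun m => by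
      simp only [hF, Function.iterate_succ_apply', hφ]
    have hstep : ∀ m, accFrom δ acc (F m) ⊆ accFrom δ acc (F (m+1)) := by
      intro m
      induction m with
      | zero => rw [hF0, hF1]; exact hlt.subset
      | succ m ih =>
        rw [hFsucc m, hFsucc (m+1)]
        exact accFrom_mono δ acc ih w₂
    have hmono : ∀ a b, a ≤ b → accFrom δ acc (F a) ⊆ accFrom δ acc (F b) := by
      intro a b hab
      induction b, hab using Nat.le_induction with
      | base => exact subset_rfl
      | succ b hb ih => exact ih.trans (hstep b)
    obtain ⟨k, l, hkl, hFe⟩ : ∃ k l, k < l ∧ F k = F l := by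
      obtain ⟨k, l, hne', he⟩ := Finite.exists_ne_map_eq_of_infinite F
      rcases lt_or_gt_of_ne hne' with h | h
      · exact ⟨k, l, h, he⟩
      · exact ⟨l, k, h, he.symm⟩
    have hstab : F (k+1) = F k := by
      apply hclass
      apply Set.Subset.antisymm
      · rw [hFe]; exact hmono _ _ hkl
      · exact hstep k
    have hkpos : 0 < k := by
      rcases Nat.eq_zero_or_pos k with hk0 | hk
      · exfalso
        subst hk0
        rw [hF1, hF0] at hstab
        exact hlt.ne (by rw [hstab])
      · exact hk
    set p := F k with hp
    have hcycp : dstar δ p w₂ = p := by rw [hp, ← hFsucc k, hstab]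
    have hqp : accFrom δ acc q ⊂ accFrom δ acc p := by
      have h1 : accFrom δ acc q ⊂ accFrom δ acc (F 1) := by rw [hF1]; exact hlt
      exact ssubset_of_ssubset_of_subset h1 (hmono 1 k hkpos)
    set G : ℕ → List C := fun n => (List.replicate n w₂).flatten with hG
    have hG0 : G 0 = [] := rfl
    have hGsucc : ∀ n, G (n+1) = w₂ ++ G n := fun n => by
      simp [hG, List.replicate_succ]
    have hGdstar : ∀ n (r : Q), dstar δ r (G n) = φ^[n] r := by
      intro n
      induction n with
      | zero => intro r; rfl
      | succ n ih =>
        intro r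
        rw [hGsucc, dstar_append, ih, Function.iterate_succ_apply]
    have hGp : ∀ n, dstar δ p (G n) = p := fun n => by
      rw [hGdstar]
      exact Function.iterate_fixed hcycp n
    have hGq : dstar δ q (G k) = p := by rw [hGdstar]
    have hGne : G k ≠ [] := by
      obtain ⟨k', rfl⟩ : ∃ k', k = k' + 1 := ⟨k - 1, by omega⟩
      rw [hGsucc]
      simp [hne]
    have hw2ns : ¬ (w₂ ∈ safeWords δ acc p) := by
      intro hw2
      have hGsafe : ∀ n, G n ∈ safeWords δ acc p := by
        intro n
        induction n with
        | zero =>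
          rw [hG0]
          intro i hi h
          simp at hi
        | succ n ih =>
          rw [hGsucc]
          exact safe_append δ acc p w₂ (G n) hw2 (by rw [hcycp]; exact ih)
      exact H q p hqp ⟨G k, hGne, hGq, hGsafe k, hGp k⟩
    simp only [safeWords, Set.mem_setOf_eq] at hw2ns
    push_neg at hw2ns
    obtain ⟨i, hi, hacc⟩ := hw2ns
    rw [← hW]
    set s := periodicW w₂ hne with hsdef
    have hfix : extWord w₂ s = s := extWord_periodic w₂ hne
    have hL : 0 < w₂.length := List.length_pos_iff.mpr hne
    rw [mem_accFrom_ext, ← hq]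
    intro N
    refine ⟨max k N * w₂.length + i, ?_, ?_⟩
    · have h1 : max k N ≤ max k N * w₂.length := Nat.le_mul_of_pos_right _ hL
      have h2 := le_max_right k N
      omega
    · have hFadd : ∀ j, F (k + j) = p := by
        intro j
        induction j with
        | zero => rfl
        | succ j ih =>
          rw [show k + (j+1) = (k+j) + 1 from rfl, hFsucc, ih, hcycp]
      have hFm : F (max k N) = p := by
        obtain ⟨j, hj⟩ : ∃ j, max k N = k + j := ⟨max k N - k, by omega⟩
        rw [hj, hFadd]
      have e1 : dbaRun δ q s (max k N * w₂.length + i) = dbaRun δ p s i := by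
        rw [run_iter δ w₂ s hfix q (max k N) i]
        exact congrArg (fun r => dbaRun δ r s i) hFm
      have e2 : dbaRun δ p s i = dstar δ p (w₂.take i) := by
        conv_lhs => rw [← hfix]
        exact run_take δ p w₂ s i (le_of_lt hi)
      have e3 : s (max k N * w₂.length + i) = w₂.get ⟨i, hi⟩ := by
        have e : (max k N * w₂.length + i) % w₂.length = i := by
          rw [Nat.add_comm, Nat.add_mul_mod_self_right]
          exact Nat.mod_eq_of_lt hi
        simp [hsdef, periodicW, e]
      rw [e1, e2, e3]
      exact hacc
end

section
/- Let W be recognized by a saturated DBA B built on top of its prefix-classifier, with total prefix preorder, and suppose W is progress-consistent. In the graph U_{B,θ}, any finite cycle (q₀, λ₀) →^{c₁} ⋯ →^{c_n} (q_n, λ_n) of length n ≥ 1 with q₀ = q_n and λ₀ ≤ λ_n yields a word w = c₁⋯c_n whose infinite repetition w^ω is accepted from q₀: w^ω ∈ q₀⁻¹W. -/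
/-- The edge relation of the universal graph `U_{B,θ}` (restricted to non-top vertices
`(q, λ)` with `λ < θ`): a `c`-colored edge from `(q, λ)` goes to `(δ(q,c), λ')` with no
constraint if `(q,c)` is a Büchi transition and with `λ' < λ` otherwise, and to any
`(q'', λ'')` with `q'' ≺ δ(q,c)`. -/
def UEdge {C Q : Type} (δ : Q → C → Q) (acc : Q → C → Prop) (θ : Ordinal)
    (v : Q × Ordinal) (c : C) (v' : Q × Ordinal) : Prop :=
  v.2 < θ ∧ v'.2 < θ ∧
    ((v'.1 = δ v.1 c ∧ (acc v.1 c ∨ v'.2 < v.2)) ∨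
      accFrom δ acc v'.1 ⊂ accFrom δ acc (δ v.1 c))
section Helpers
variable {C Q : Type} (δ : Q → C → Q) (acc : Q → C → Prop)

lemma dbaRun_shift (q : Q) (s : ℕ → C) (a : ℕ) :
    ∀ m, dbaRun δ q s (a + m) = dbaRun δ (dbaRun δ q s a) (fun n => s (a + n)) m := by
  intro m
  induction m with
  | zero => simp [dbaRun]
  | succ m ih =>
    rw [show a + (m + 1) = (a + m) + 1 from rfl]
    simp only [dbaRun, ih]

lemma dbaRun_congr (q : Q) {s t : ℕ → C} :
    ∀ m, (∀ i < m, s i = t i) → dbaRun δ q s m = dbaRun δ q t m := by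
  intro m
  induction m with
  | zero => intro _; rfl
  | succ m ih =>
    intro h
    simp only [dbaRun, ih (fun i hi => h i (by omega)), h m (by omega)]

lemma dstar_append (q : Q) (u v : List C) :
    dstar δ q (u ++ v) = dstar δ (dstar δ q u) v := List.foldl_append ..

lemma dstar_ofFn (q : Q) (s : ℕ → C) (i : ℕ) :
    ∀ t, dstar δ (dbaRun δ q s i) (List.ofFn fun k : Fin t => s (i + k)) = dbaRun δ q s (i + t) := by
  intro t
  induction t with
  | zero => simp [dstar]
  | succ t ih =>
    rw [List.ofFn_succ' (fun k : Fin (t+1) => s (i + k)), List.concat_eq_append,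
      dstar_append]
    simp only [Fin.coe_castSucc, Fin.val_last]
    rw [ih]
    rw [show i + (t + 1) = (i + t) + 1 from rfl]
    rfl

lemma dstar_ofFn' (q : Q) (s : ℕ → C) (t : ℕ) :
    dstar δ q (List.ofFn fun k : Fin t => s k) = dbaRun δ q s t := by
  have := dstar_ofFn δ q s 0 t
  simpa [dbaRun] using this

lemma dbaRun_periodic (q : Q) (s : ℕ → C) (L : ℕ) (hs : ∀ i, s (L + i) = s i)
    (hq : dbaRun δ q s L = q) (m : ℕ) : dbaRun δ q s (L + m) = dbaRun δ q s m := by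
  rw [dbaRun_shift, hq]
  congr 1
  exact funext hs

lemma dbaRun_periodic_mul (q : Q) (s : ℕ → C) (L : ℕ) (hs : ∀ i, s (L + i) = s i)
    (hq : dbaRun δ q s L = q) : ∀ k m, dbaRun δ q s (k * L + m) = dbaRun δ q s m := by
  intro k
  induction k with
  | zero => simp
  | succ k ih =>
    intro m
    rw [show (k + 1) * L + m = L + (k * L + m) by ring, dbaRun_periodic δ q s L hs hq, ih m]

lemma extWord_ge {w : List C} (s : ℕ → C) (m : ℕ) : extWord w s (w.length + m) = s m := by
  simp [extWord]

lemma dbaRun_extWord_len (q : Q) (w : List C) (s : ℕ → C) :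
    dbaRun δ q (extWord w s) w.length = dstar δ q w := by
  rw [← dstar_ofFn' δ q (extWord w s) w.length]
  congr 1
  have : (fun k : Fin w.length => extWord w s k) = w.get := by
    funext k
    simp [extWord, k.isLt]
  rw [this, List.ofFn_get]

lemma extWord_run (q : Q) (w : List C) (s : ℕ → C) (m : ℕ) :
    dbaRun δ q (extWord w s) (w.length + m) = dbaRun δ (dstar δ q w) s m := by
  rw [dbaRun_shift, dbaRun_extWord_len]
  congr 1
  exact funext fun n => extWord_ge s n

lemma accFrom_extWord (q : Q) (w : List C) (s : ℕ → C) :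
    extWord w s ∈ accFrom δ acc q ↔ s ∈ accFrom δ acc (dstar δ q w) := by
  constructor
  · intro h N
    obtain ⟨n, hn, hacc⟩ := h (w.length + N)
    refine ⟨n - w.length, by omega, ?_⟩
    have hn' : n = w.length + (n - w.length) := by omega
    rw [hn'] at hacc
    rwa [extWord_run, extWord_ge] at hacc
  · intro h N
    obtain ⟨m, hm, hacc⟩ := h N
    refine ⟨w.length + m, by omega, ?_⟩
    rwa [extWord_run, extWord_ge]

lemma winCont_accFrom (q : Q) (u : List C) :
    winCont (accFrom δ acc q) u = accFrom δ acc (dstar δ q u) :=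
  Set.ext fun s => accFrom_extWord δ acc q u s

lemma accFrom_mono_delta {q q' : Q} (c : C)
    (h : accFrom δ acc q ⊆ accFrom δ acc q') :
    accFrom δ acc (δ q c) ⊆ accFrom δ acc (δ q' c) := by
  intro s hs
  have h1 : extWord [c] s ∈ accFrom δ acc q := by
    rw [accFrom_extWord]; exact hs
  have h2 := h h1
  rwa [accFrom_extWord] at h2

end Helpers

section Main
variable {C Q : Type} {δ : Q → C → Q} {acc : Q → C → Prop}

lemma accFrom_acc_mono {acc' : Q → C → Prop} (h : ∀ q c, acc q c → acc' q c) (q : Q) :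
    accFrom δ acc q ⊆ accFrom δ acc' q := by
  intro s hs N
  obtain ⟨m, hm, ha⟩ := hs N
  exact ⟨m, hm, h _ _ ha⟩

/-- From saturation: every non-Büchi transition `(p,c)` lies on a fully safe periodic word. -/
lemma sat_safe {qinit : Q} (hsat : Saturated δ acc qinit) {p : Q} {c : C} (hnacc : ¬ acc p c) :
    ∃ (L : ℕ) (s : ℕ → C), 1 ≤ L ∧ (∀ i, s i = s (i % L)) ∧ s 0 = c ∧
      dbaRun δ p s L = p ∧ ∀ m, ¬ acc (dbaRun δ p s m) (s m) := by
  set acc' : Q → C → Prop := fun q' c' => acc q' c' ∨ (q' = p ∧ c' = c) with hacc'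
  have hmono : ∀ q c, acc q c → acc' q c := fun q c h => Or.inl h
  have hne : acc' ≠ acc := by
    intro h
    apply hnacc
    have : acc' p c := Or.inr ⟨rfl, rfl⟩
    rwa [h] at this
  have hneq := hsat acc' hmono hne
  have hsub := accFrom_acc_mono (δ := δ) hmono qinit
  obtain ⟨s, hs', hs⟩ : ∃ s, s ∈ accFrom δ acc' qinit ∧ s ∉ accFrom δ acc qinit := by
    by_contra h
    push_neg at h
    exact hneq (Set.Subset.antisymm h hsub)
  simp only [accFrom, Set.mem_setOf_eq] at hs hs'
  push_neg at hs
  obtain ⟨N, hsafe⟩ := hs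
  obtain ⟨i, hiN, hai⟩ := hs' N
  have hip : dbaRun δ qinit s i = p ∧ s i = c := by
    rcases hai with h | h
    · exact absurd h (hsafe i hiN)
    · exact h
  obtain ⟨j, hj, haj⟩ := hs' (i + 1)
  have hjp : dbaRun δ qinit s j = p := by
    rcases haj with h | h
    · exact absurd h (hsafe j (by omega))
    · exact h.1
  set T := j - i with hTdef
  have hT : 0 < T := by omega
  set t : ℕ → C := fun m => s (i + m % T) with ht
  have claimA : ∀ m ≤ T, dbaRun δ p t m = dbaRun δ qinit s (i + m) := by
    intro m
    induction m with
    | zero => intro _; simp [dbaRun, hip.1]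
    | succ m ih =>
      intro hm
      have h1 := ih (by omega)
      show δ (dbaRun δ p t m) (t m) = _
      rw [h1, ht]
      simp only [Nat.mod_eq_of_lt (show m < T by omega)]
      rfl
  have hqT : dbaRun δ p t T = p := by
    rw [claimA T le_rfl, show i + T = j by omega, hjp]
  have htmod : ∀ m, t m = t (m % T) := by
    intro m
    simp [ht, Nat.mod_mod_of_dvd]
  have htper : ∀ m, t (T + m) = t m := by
    intro m
    simp [ht, Nat.add_mod_left]
  refine ⟨T, t, hT, htmod, by simp [ht, hip.2], hqT, ?_⟩
  intro m
  have hmlt : m % T < T := Nat.mod_lt _ hT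
  have hrun : dbaRun δ p t m = dbaRun δ p t (m % T) := by
    conv_lhs => rw [show m = (m / T) * T + m % T from by
      rw [Nat.mul_comm]; exact (Nat.div_add_mod m T).symm]
    exact dbaRun_periodic_mul δ p t T htper hqT _ _
  rw [hrun, claimA _ hmlt.le]
  exact hsafe (i + m % T) (by omega)

lemma periodicW_ofFn {C : Type} {n : ℕ} (f : ℕ → C) (h : (List.ofFn fun k : Fin n => f k) ≠ []) :
    periodicW _ h = fun m => f (m % n) := by
  funext m
  simp [periodicW, List.get_ofFn]

/-- Key lemma: a non-Büchi transition preserves strictness of residual inclusion. -/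
lemma key {qinit : Q} {W : Set (ℕ → C)} (hW : accFrom δ acc qinit = W)
    (hreach : ∀ q : Q, ∃ w : List C, dstar δ qinit w = q)
    (hsat : Saturated δ acc qinit)
    (hclass : ∀ q q' : Q, accFrom δ acc q = accFrom δ acc q' → q = q')
    (hpc : ProgressConsistent W) {p q : Q} {c : C} (hnacc : ¬ acc p c)
    (hlt : accFrom δ acc q ⊂ accFrom δ acc p) :
    accFrom δ acc (δ q c) ⊂ accFrom δ acc (δ p c) := by
  have hsub := accFrom_mono_delta δ acc c hlt.subset
  rw [Set.ssubset_iff_subset_ne]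
  refine ⟨hsub, ?_⟩
  intro hEq
  have heq : δ q c = δ p c := hclass _ _ hEq
  obtain ⟨L, t, hL, htmod, ht0, hqT, hsafeT⟩ := sat_safe hsat hnacc
  set z : List C := List.ofFn fun k : Fin L => t k with hz
  have hzlen : z.length = L := by simp [hz]
  have hzne : z ≠ [] := by
    apply List.ne_nil_of_length_pos
    omega
  have hdp : dstar δ p z = p := by rw [hz, dstar_ofFn' δ p t L]; exact hqT
  have hdq : dstar δ q z = p := by
    obtain ⟨L', rfl⟩ : ∃ L', L = L' + 1 := ⟨L - 1, by omega⟩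
    have hcons : z = c :: List.ofFn (fun i : Fin L' => t (i.succ)) := by
      rw [hz, List.ofFn_succ]
      norm_num [ht0]
    have hqp : dstar δ q z = dstar δ p z := by
      rw [hcons]
      show dstar δ (δ q c) _ = dstar δ (δ p c) _
      rw [heq]
    rw [hqp, hdp]
  obtain ⟨u, hu⟩ := hreach q
  have hw1 : winCont W u = accFrom δ acc q := by
    rw [← hW, winCont_accFrom, hu]
  have hw2 : winCont W (u ++ z) = accFrom δ acc p := by
    rw [← hW, winCont_accFrom, dstar_append, hu, hdq]
  have hmem := hpc u z hzne (by rw [hw1, hw2]; exact hlt)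
  have hpw : periodicW z hzne = t := by
    have h1 : periodicW z hzne = fun m => t (m % L) := periodicW_ofFn (fun k => t k) hzne
    rw [h1]
    funext m
    exact (htmod m).symm
  rw [hpw, ← hW, accFrom_extWord, hu] at hmem
  obtain ⟨m, hm, hacc⟩ := hmem L
  obtain ⟨m', rfl⟩ : ∃ m', m = L + m' := ⟨m - L, by omega⟩
  have hqL : dbaRun δ q t L = p := by rw [← dstar_ofFn' δ q t L, ← hz, hdq]
  have htper : ∀ i, t (L + i) = t i := fun i => by
    rw [htmod (L + i), Nat.add_mod_left, ← htmod]
  have hshift : dbaRun δ q t (L + m') = dbaRun δ p t m' := by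
    rw [dbaRun_shift, hqL]
    congr 1
    exact funext htper
  rw [hshift, htper] at hacc
  exact hsafeT m' hacc

end Main
/-- in `U_{B,θ}` (for a saturated DBA built on top of its prefix-classifier,
with total prefix preorder, recognizing a progress-consistent objective `W`), a finite
cycle `(q₀,λ₀) → ⋯ → (q_n,λ_n)` with `n ≥ 1`, `q₀ = q_n` and `λ₀ ≤ λ_n` reads a word `w`
with `w^ω` accepted from `q₀`. -/
theorem stmt15 {C Q : Type} [Fintype Q] (qinit : Q) (δ : Q → C → Q) (acc : Q → C → Prop)
    (W : Set (ℕ → C)) (hW : accFrom δ acc qinit = W)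
    (hreach : ∀ q : Q, ∃ w : List C, dstar δ qinit w = q)
    (hsat : Saturated δ acc qinit)
    (hclass : ∀ q q' : Q, accFrom δ acc q = accFrom δ acc q' → q = q')
    (htot : ∀ q q' : Q, accFrom δ acc q ⊆ accFrom δ acc q' ∨
      accFrom δ acc q' ⊆ accFrom δ acc q)
    (hpc : ProgressConsistent W)
    (θ : Ordinal) (n : ℕ) (hn : 1 ≤ n) (qs : ℕ → Q) (ls : ℕ → Ordinal) (cs : ℕ → C)
    (hpath : ∀ i < n, UEdge δ acc θ (qs i, ls i) (cs i) (qs (i + 1), ls (i + 1)))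
    (hcyc : qs n = qs 0) (hord : ls 0 ≤ ls n) :
    (fun i => cs (i % n)) ∈ accFrom δ acc (qs 0) := by

  classical
  set p : ℕ → Q := dbaRun δ (qs 0) cs with hp
  have F1 : ∀ i ≤ n, accFrom δ acc (qs i) ⊆ accFrom δ acc (p i) := by
    intro i
    induction i with
    | zero => intro _; exact subset_rfl
    | succ i ih =>
      intro hi
      have hlt : i < n := by omega
      have hedge : (qs (i + 1) = δ (qs i) (cs i) ∧ (acc (qs i) (cs i) ∨ ls (i + 1) < ls i)) ∨
          accFrom δ acc (qs (i + 1)) ⊂ accFrom δ acc (δ (qs i) (cs i)) := (hpath i hlt).2.2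
      have hmono := accFrom_mono_delta δ acc (cs i) (ih (by omega))
      rcases hedge with ⟨he, -⟩ | hj
      · rw [he]; exact hmono
      · exact hj.subset.trans hmono
  have F2 : accFrom δ acc (qs 0) ⊆ accFrom δ acc (p n) := by
    have := F1 n le_rfl
    rwa [hcyc] at this
  set w : List C := List.ofFn fun k : Fin n => cs k with hwdef
  have hpn : dstar δ (qs 0) w = p n := dstar_ofFn' δ (qs 0) cs n
  by_cases hEq : accFrom δ acc (qs 0) = accFrom δ acc (p n)
  · -- same residuals at both ends of the cycle
    have hq0 : p n = qs 0 := hclass _ _ hEq.symm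
    by_cases hacc : ∃ i, i < n ∧ acc (p i) (cs i)
    · -- the real cycle contains a Büchi transition
      obtain ⟨i0, hi0, hai⟩ := hacc
      set s : ℕ → C := fun i => cs (i % n) with hs
      have hsagree : ∀ j < n, s j = cs j := fun j hj => by
        simp [hs, Nat.mod_eq_of_lt hj]
      have hrun : ∀ j ≤ n, dbaRun δ (qs 0) s j = p j := fun j hj =>
        dbaRun_congr δ (qs 0) j (fun i hi => hsagree i (by omega))
      have hrn : dbaRun δ (qs 0) s n = qs 0 := by rw [hrun n le_rfl, hq0]
      have hsper : ∀ j, s (n + j) = s j := fun j => by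
        simp [hs, Nat.add_mod_left]
      intro N
      refine ⟨N * n + i0, ?_, ?_⟩
      · have : N ≤ N * n := Nat.le_mul_of_pos_right _ (by omega)
        omega
      · rw [dbaRun_periodic_mul δ (qs 0) s n hsper hrn N i0, hrun i0 hi0.le]
        have hch : s (N * n + i0) = cs i0 := by
          show cs ((N * n + i0) % n) = cs i0
          rw [Nat.add_comm, Nat.add_mul_mod_self_right, Nat.mod_eq_of_lt hi0]
        rw [hch]
        exact hai
    · -- the real cycle is safe: contradiction with the ordinal constraint
      push_neg at hacc
      exfalso
      have Inv : ∀ i ≤ n, accFrom δ acc (qs i) ⊂ accFrom δ acc (p i) ∨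
          (qs i = p i ∧ ls i ≤ ls 0 ∧ (1 ≤ i → ls i < ls 0)) := by
        intro i
        induction i with
        | zero => intro _; exact Or.inr ⟨rfl, le_rfl, by omega⟩
        | succ i ih =>
          intro hi
          have hlt : i < n := by omega
          have hedge : (qs (i + 1) = δ (qs i) (cs i) ∧ (acc (qs i) (cs i) ∨ ls (i + 1) < ls i)) ∨
              accFrom δ acc (qs (i + 1)) ⊂ accFrom δ acc (δ (qs i) (cs i)) := (hpath i hlt).2.2
          have hsubQ : accFrom δ acc (qs i) ⊆ accFrom δ acc (p i) := F1 i (by omega)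
          rcases hedge with ⟨he, hor⟩ | hj
          · rcases ih (by omega) with hst | ⟨hqp, hle, -⟩
            · left
              rw [he]
              exact key hW hreach hsat hclass hpc (hacc i hlt) hst
            · rcases hor with ha | hlo
              · exact absurd (hqp ▸ ha) (hacc i hlt)
              · right
                have hlo' : ls (i + 1) < ls 0 := lt_of_lt_of_le hlo hle
                refine ⟨?_, hlo'.le, fun _ => hlo'⟩
                rw [he, hqp]
                rfl
          · left
            exact ssubset_of_ssubset_of_subset hj (accFrom_mono_delta δ acc (cs i) hsubQ)
      rcases Inv n le_rfl with hst | ⟨-, -, hlt1⟩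
      · rw [hcyc, hq0] at hst
        exact ssubset_irrefl _ hst
      · exact absurd hord (not_le.mpr (hlt1 hn))
  · -- strict progress around the cycle: use progress-consistency
    have hss : accFrom δ acc (qs 0) ⊂ accFrom δ acc (p n) :=
      Set.ssubset_iff_subset_ne.mpr ⟨F2, hEq⟩
    have hwne : w ≠ [] := by
      apply List.ne_nil_of_length_pos
      simp [hwdef]
      omega
    obtain ⟨u, hu⟩ := hreach (qs 0)
    have hw1 : winCont W u = accFrom δ acc (qs 0) := by rw [← hW, winCont_accFrom, hu]
    have hw2 : winCont W (u ++ w) = accFrom δ acc (p n) := by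
      rw [← hW, winCont_accFrom, dstar_append, hu, hpn]
    have hmem := hpc u w hwne (by rw [hw1, hw2]; exact hss)
    have hpw : periodicW w hwne = fun i => cs (i % n) := periodicW_ofFn (fun k => cs k) hwne
    rw [hpw, ← hW, accFrom_extWord, hu] at hmem
    exact hmem
end

section
/- Let W ⊆ C^ω have a total prefix preorder, be progress-consistent, and be recognized by a deterministic Büchi automaton built on top of its prefix-classifier. Then W is half-positional: in every game arena (of any cardinality), Player 1 has a positional strategy that is winning from every vertex from which some winning strategy exists. -/
universe u

/-- An infinite play in an arena with edge set `E`. -/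
def IsPlay {C : Type} {V : Type u} (E : Set (V × C × V)) (p : ℕ → V) (col : ℕ → C) : Prop :=
  ∀ n, (p n, col n, p (n + 1)) ∈ E

/-- A strategy of Player 1: from a history and the current vertex, choose a colored edge. -/
def Strat (C : Type) (V : Type u) : Type u := List (V × C) → V → C × V

/-- The history (sequence of visited vertices with emitted colors) after `n` steps. -/
def histPref {C : Type} {V : Type u} (p : ℕ → V) (col : ℕ → C) (n : ℕ) : List (V × C) :=
  (List.range n).map fun i => (p i, col i)

/-- A strategy is valid if it always picks actual edges at Player-1 vertices. -/
def ValidStrat {C : Type} {V : Type u} (E : Set (V × C × V)) (own1 : V → Prop)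
    (σ : Strat C V) : Prop :=
  ∀ h v, own1 v → (v, (σ h v).1, (σ h v).2) ∈ E

/-- A play is consistent with strategy `σ` if `σ`'s choices are followed at Player-1 vertices. -/
def ConsistentPlay {C : Type} {V : Type u} (own1 : V → Prop) (σ : Strat C V)
    (p : ℕ → V) (col : ℕ → C) : Prop :=
  ∀ n, own1 (p n) → (col n, p (n + 1)) = σ (histPref p col n) (p n)

/-- `σ` is winning from `v` for objective `W`. -/
def WinningFrom {C : Type} {V : Type u} (W : Set (ℕ → C)) (E : Set (V × C × V))
    (own1 : V → Prop) (σ : Strat C V) (v : V) : Prop :=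
  ∀ p col, IsPlay E p col → p 0 = v → ConsistentPlay own1 σ p col → col ∈ W

/-- A positional strategy only depends on the current vertex. -/
def PositionalStrat {C : Type} {V : Type u} (σ : Strat C V) : Prop :=
  ∀ h h' v, σ h v = σ h' v

/-- Player 1 has a single positional strategy, optimal in the arena `(E, own1)`. -/
def HalfPosArena {C : Type} {V : Type u} (W : Set (ℕ → C)) (E : Set (V × C × V))
    (own1 : V → Prop) : Prop :=
  ∃ σ : Strat C V, ValidStrat E own1 σ ∧ PositionalStrat σ ∧
    ∀ v, (∃ τ : Strat C V, ValidStrat E own1 τ ∧ WinningFrom W E own1 τ v) →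
      WinningFrom W E own1 σ v

/-- Half-positionality over all (non-blocking) arenas of any cardinality. -/
def HalfPositionalAll {C : Type} (W : Set (ℕ → C)) : Prop :=
  ∀ (V : Type u) (E : Set (V × C × V)) (own1 : V → Prop),
    (∀ v, ∃ c v', (v, c, v') ∈ E) → HalfPosArena W E own1

/-- Half-positionality over finite one-player (all vertices to Player 1) arenas. -/
def HalfPosFinOnePlayer {C : Type} (W : Set (ℕ → C)) : Prop :=
  ∀ (V : Type) [Fintype V] (E : Set (V × C × V)),
    (∀ v, ∃ c v', (v, c, v') ∈ E) → HalfPosArena W E (fun _ => True)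

/- ========== AUXILIARY MATERIAL ========== -/

namespace Stmt16Aux

variable {C Q : Type} (δ : Q → C → Q) (acc : Q → C → Prop)

/-- shift of an infinite word -/
def shiftW (s : ℕ → C) (k : ℕ) : ℕ → C := fun n => s (k + n)

/-- finite segment of an infinite word, starting at `a`, of length `n` -/
def seg (col : ℕ → C) (a n : ℕ) : List C := (List.range n).map fun i => col (a + i)

@[simp] lemma seg_zero (col : ℕ → C) (a : ℕ) : seg col a 0 = [] := rfl

@[simp] lemma seg_length (col : ℕ → C) (a n : ℕ) : (seg col a n).length = n := by
  simp [seg]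

lemma seg_succ (col : ℕ → C) (a n : ℕ) :
    seg col a (n + 1) = seg col a n ++ [col (a + n)] := by
  simp [seg, List.range_succ]

lemma seg_cons (col : ℕ → C) (a n : ℕ) :
    seg col a (n + 1) = col a :: seg col (a + 1) n := by
  simp only [seg, List.range_succ_eq_map, List.map_cons, Nat.add_zero, List.map_map]
  congr 1
  apply List.map_congr_left
  intro i _
  have h : a + (i + 1) = a + 1 + i := by omega
  simp [Function.comp, Nat.succ_eq_add_one, h]

lemma seg_append (col : ℕ → C) (a n m : ℕ) :
    seg col a n ++ seg col (a + n) m = seg col a (n + m) := by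
  induction m with
  | zero => simp
  | succ m ih =>
      have h1 : n + (m + 1) = (n + m) + 1 := by omega
      rw [h1, seg_succ col a (n + m), ← ih, List.append_assoc, seg_succ col (a + n) m,
        Nat.add_assoc]

lemma seg_take (col : ℕ → C) (a n j : ℕ) (h : j ≤ n) :
    (seg col a n).take j = seg col a j := by
  simp [seg, ← List.map_take, List.take_range, Nat.min_eq_left h]

lemma seg_get (col : ℕ → C) (a n j : ℕ) (h : j < (seg col a n).length) :
    (seg col a n).get ⟨j, h⟩ = col (a + j) := by
  simp [seg]

lemma dstar_append (q : Q) (w₁ w₂ : List C) :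
    dstar δ q (w₁ ++ w₂) = dstar δ (dstar δ q w₁) w₂ := List.foldl_append ..

@[simp] lemma dstar_nil (q : Q) : dstar δ q [] = q := rfl

@[simp] lemma dstar_singleton (q : Q) (c : C) : dstar δ q [c] = δ q c := rfl

lemma dstar_take_succ (q : Q) (w : List C) (j : ℕ) (h : j < w.length) :
    dstar δ q (w.take (j + 1)) = δ (dstar δ q (w.take j)) (w.get ⟨j, h⟩) := by
  have h1 : w.take (j + 1) = w.take j ++ [w.get ⟨j, h⟩] := by
    rw [← List.take_concat_get h]
    simp
  rw [h1, dstar_append, dstar_singleton]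

/-- run along a shifted word equals dstar of a segment -/
lemma run_seg (q : Q) (col : ℕ → C) (a n : ℕ) :
    dbaRun δ q (shiftW col a) n = dstar δ q (seg col a n) := by
  induction n with
  | zero => rfl
  | succ n ih =>
      rw [seg_succ, dstar_append]
      simp [dbaRun, ih, shiftW, dstar]

@[simp] lemma shiftW_zero (col : ℕ → C) : shiftW col 0 = col := by
  funext n; simp [shiftW]

lemma run_seg0 (q : Q) (col : ℕ → C) (n : ℕ) :
    dbaRun δ q col n = dstar δ q (seg col 0 n) := by
  rw [← run_seg δ q col 0 n, shiftW_zero]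

lemma run_add (q : Q) (s : ℕ → C) (k n : ℕ) :
    dbaRun δ q s (k + n) = dbaRun δ (dbaRun δ q s k) (shiftW s k) n := by
  induction n with
  | zero => rfl
  | succ n ih => simp [dbaRun, ← Nat.add_assoc, ih, shiftW]

lemma mem_accFrom_shift_iff (q : Q) (s : ℕ → C) (k : ℕ) :
    s ∈ accFrom δ acc q ↔ shiftW s k ∈ accFrom δ acc (dbaRun δ q s k) := by
  constructor
  · intro h N
    obtain ⟨n, hn, hacc⟩ := h (k + N)
    refine ⟨n - k, by omega, ?_⟩
    have h1 : k + (n - k) = n := by omega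
    have h2 : dbaRun δ (dbaRun δ q s k) (shiftW s k) (n - k) = dbaRun δ q s n := by
      rw [← run_add, h1]
    rw [h2]
    simpa [shiftW, h1] using hacc
  · intro h N
    obtain ⟨n, hn, hacc⟩ := h N
    refine ⟨k + n, by omega, ?_⟩
    rw [run_add]
    exact hacc

lemma extWord_shift (w : List C) (s : ℕ → C) : shiftW (extWord w s) w.length = s := by
  funext n
  simp [shiftW, extWord]

lemma extWord_run_le (q : Q) (w : List C) (s : ℕ → C) (n : ℕ) (h : n ≤ w.length) :
    dbaRun δ q (extWord w s) n = dstar δ q (w.take n) := by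
  induction n with
  | zero => rfl
  | succ n ih =>
      have hn : n < w.length := by omega
      rw [dstar_take_succ δ q w n hn]
      simp only [dbaRun, ih (by omega)]
      congr 1
      simp [extWord, hn]

lemma extWord_run (q : Q) (w : List C) (s : ℕ → C) :
    dbaRun δ q (extWord w s) w.length = dstar δ q w := by
  rw [extWord_run_le δ q w s w.length le_rfl, List.take_length]

lemma mem_accFrom_extWord (q : Q) (w : List C) (s : ℕ → C) :
    extWord w s ∈ accFrom δ acc q ↔ s ∈ accFrom δ acc (dstar δ q w) := by
  rw [mem_accFrom_shift_iff δ acc q (extWord w s) w.length, extWord_shift, extWord_run]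

/-- the run on a periodic word cycles, provided the base word is a loop -/
lemma periodic_run (q : Q) (w : List C) (h : w ≠ []) (hloop : dstar δ q w = q) (n : ℕ) :
    dbaRun δ q (periodicW w h) n = dstar δ q (w.take (n % w.length)) := by
  have hlen : 0 < w.length := List.length_pos_iff.mpr h
  induction n with
  | zero => simp [dbaRun, Nat.zero_mod]
  | succ n ih =>
      have hj : n % w.length < w.length := Nat.mod_lt _ hlen
      have hstep : dbaRun δ q (periodicW w h) (n + 1)
          = dstar δ q (w.take (n % w.length + 1)) := by
        rw [dstar_take_succ δ q w _ hj]
        simp [dbaRun, ih, periodicW]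
      rw [hstep]
      have key : (n % w.length + 1) % w.length = (n + 1) % w.length :=
        (Nat.mod_modEq n w.length).add_right 1
      by_cases hc : n % w.length + 1 = w.length
      · have h1 : (n + 1) % w.length = 0 := by rw [← key, hc, Nat.mod_self]
        rw [h1, hc, List.take_length, List.take_zero, hloop, dstar_nil]
      · have hlt : n % w.length + 1 < w.length := by omega
        have h2 : (n + 1) % w.length = n % w.length + 1 := by
          rw [← key, Nat.mod_eq_of_lt hlt]
        rw [h2]

/- ========== Part 2: order utilities, pigeonhole, accS, PC lemma ========== -/

lemma delta_mono (q q' : Q) (c : C) (h : accFrom δ acc q ⊆ accFrom δ acc q') :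
    accFrom δ acc (δ q c) ⊆ accFrom δ acc (δ q' c) := by
  intro s hs
  have h1 : extWord [c] s ∈ accFrom δ acc q := by
    rw [mem_accFrom_extWord δ acc q [c] s, dstar_singleton]
    exact hs
  have h2 := h h1
  rw [mem_accFrom_extWord δ acc q' [c] s, dstar_singleton] at h2
  exact h2

lemma dstar_cons (q : Q) (c : C) (w : List C) :
    dstar δ q (c :: w) = dstar δ (δ q c) w := rfl

lemma dstar_mono (w : List C) : ∀ q q' : Q, accFrom δ acc q ⊆ accFrom δ acc q' →
    accFrom δ acc (dstar δ q w) ⊆ accFrom δ acc (dstar δ q' w) := by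
  induction w with
  | nil => intro q q' h; exact h
  | cons c w ih =>
      intro q q' h
      rw [dstar_cons, dstar_cons]
      exact ih _ _ (delta_mono δ acc q q' c h)

lemma exists_min_list
    (htot' : ∀ q q' : Q, accFrom δ acc q ⊆ accFrom δ acc q' ∨ accFrom δ acc q' ⊆ accFrom δ acc q) :
    ∀ l : List Q, l ≠ [] → ∃ q ∈ l, ∀ q' ∈ l, accFrom δ acc q ⊆ accFrom δ acc q' := by
  intro l
  induction l with
  | nil => intro h; exact absurd rfl h
  | cons x xs ih =>
      intro _
      by_cases hxs : xs = []
      · subst hxs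
        refine ⟨x, List.mem_cons_self, ?_⟩
        intro q' hq'
        rcases List.mem_singleton.mp hq' with rfl
        exact subset_rfl
      · obtain ⟨q, hq, hql⟩ := ih hxs
        rcases htot' x q with hle | hle
        · refine ⟨x, List.mem_cons_self, ?_⟩
          intro q' hq'
          rcases List.mem_cons.mp hq' with rfl | hmem
          · exact subset_rfl
          · exact subset_trans hle (hql q' hmem)
        · refine ⟨q, List.mem_cons_of_mem _ hq, ?_⟩
          intro q' hq'
          rcases List.mem_cons.mp hq' with rfl | hmem
          · exact hle
          · exact hql q' hmem

lemma exists_least [Fintype Q]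
    (htot' : ∀ q q' : Q, accFrom δ acc q ⊆ accFrom δ acc q' ∨ accFrom δ acc q' ⊆ accFrom δ acc q)
    (S : Set Q) (hS : S.Nonempty) :
    ∃ q, q ∈ S ∧ ∀ q' ∈ S, accFrom δ acc q ⊆ accFrom δ acc q' := by
  classical
  set l : List Q := (Finset.univ.filter (· ∈ S)).toList with hl
  have hmem : ∀ q : Q, q ∈ l ↔ q ∈ S := by
    intro q
    simp [hl, Finset.mem_toList]
  obtain ⟨q₀, hq₀⟩ := hS
  have hlne : l ≠ [] := List.ne_nil_of_mem ((hmem q₀).mpr hq₀)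
  obtain ⟨q, hq, hql⟩ := exists_min_list δ acc htot' l hlne
  exact ⟨q, (hmem q).mp hq, fun q' hq' => hql q' ((hmem q').mpr hq')⟩

lemma exists_io_fiber [Fintype Q] (f : ℕ → Q) (P : ℕ → Prop)
    (h : ∀ N, ∃ t, N ≤ t ∧ P t) :
    ∃ q : Q, ∀ N, ∃ t, N ≤ t ∧ P t ∧ f t = q := by
  by_contra hc
  push_neg at hc
  choose Nq hNq using hc
  set M := Finset.univ.sup Nq with hM
  obtain ⟨t, ht, hPt⟩ := h M
  exact hNq (f t) t (le_trans (Finset.le_sup (Finset.mem_univ (f t))) ht) hPt rfl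

lemma exists_subseq (P : ℕ → Prop) (h : ∀ N, ∃ t, N ≤ t ∧ P t) :
    ∃ u : ℕ → ℕ, StrictMono u ∧ ∀ k, P (u k) := by
  choose g hg1 hg2 using h
  let u : ℕ → ℕ := fun k => Nat.rec (g 0) (fun _ prev => g (prev + 1)) k
  have hsucc : ∀ n, u (n + 1) = g (u n + 1) := fun n => rfl
  refine ⟨u, strictMono_nat_of_lt_succ (fun n => ?_), fun k => ?_⟩
  · have := hg1 (u n + 1)
    rw [hsucc]
    omega
  · cases k with
    | zero => exact hg2 0
    | succ k => rw [hsucc]; exact hg2 (u k + 1)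

lemma no_desc (f : ℕ → Ordinal.{v}) (h : ∀ n, f (n + 1) < f n) : False := by
  obtain ⟨a, ⟨n, rfl⟩, hmin⟩ :=
    (wellFounded_lt (α := Ordinal.{v})).has_min (Set.range f) ⟨f 0, 0, rfl⟩
  exact hmin (f (n + 1)) ⟨n + 1, rfl⟩ (h n)

/-- loop-saturated acceptance condition -/
def accS (q : Q) (c : C) : Prop :=
  ∀ (u : List C), dstar δ q (c :: u) = q →
    ∀ h : (c :: u : List C) ≠ [], periodicW (c :: u) h ∈ accFrom δ acc q

lemma acc_mem_accS (q : Q) (c : C) (ha : acc q c) : accS δ acc q c := by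
  intro u hloop h N
  set w : List C := c :: u with hw
  have hlen : 0 < w.length := List.length_pos_iff.mpr h
  refine ⟨N * w.length, Nat.le_mul_of_pos_right N hlen, ?_⟩
  have hmod : (N * w.length) % w.length = 0 := Nat.mul_mod_left _ _
  rw [periodic_run δ q w h hloop (N * w.length), hmod]
  simpa [periodicW, hmod, hw] using ha

lemma loop_has_acc (q : Q) (w : List C) (h : w ≠ []) (hloop : dstar δ q w = q)
    (hmem : periodicW w h ∈ accFrom δ acc q) :
    ∃ j, ∃ hj : j < w.length, acc (dstar δ q (w.take j)) (w.get ⟨j, hj⟩) := by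
  obtain ⟨n, _, hacc⟩ := hmem 0
  refine ⟨n % w.length, Nat.mod_lt _ (List.length_pos_iff.mpr h), ?_⟩
  rw [periodic_run δ q w h hloop n] at hacc
  exact hacc

lemma winCont_eq (W : Set (ℕ → C)) (qinit : Q) (hL : accFrom δ acc qinit = W) (w : List C) :
    winCont W w = accFrom δ acc (dstar δ qinit w) := by
  ext s
  rw [← hL]
  exact mem_accFrom_extWord δ acc qinit w s

lemma pc_loop (W : Set (ℕ → C)) (qinit : Q) (hL : accFrom δ acc qinit = W)
    (hreach : ∀ q : Q, ∃ w : List C, dstar δ qinit w = q)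
    (hinj : ∀ q q' : Q, accFrom δ acc q = accFrom δ acc q' → q = q')
    (hpc : ProgressConsistent W)
    (m : Q) (w : List C) (hne : w ≠ [])
    (hsub : accFrom δ acc m ⊆ accFrom δ acc (dstar δ m w))
    (hne2 : m ≠ dstar δ m w) :
    periodicW w hne ∈ accFrom δ acc m := by
  obtain ⟨w₀, hw₀⟩ := hreach m
  have hss : winCont W w₀ ⊂ winCont W (w₀ ++ w) := by
    rw [winCont_eq δ acc W qinit hL, winCont_eq δ acc W qinit hL, hw₀, dstar_append, hw₀]
    rw [ssubset_iff_subset_ne]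
    exact ⟨hsub, fun hcontra => hne2 (hinj _ _ hcontra)⟩
  have h := hpc w₀ w hne hss
  rw [← hL, mem_accFrom_extWord, hw₀] at h
  exact h
/- ========== Part 3: the endgame lemma ========== -/

lemma endgame [Fintype Q] (q₀ m : Q) (col : ℕ → C) (u : ℕ → ℕ) (hu : StrictMono u)
    (h0 : accFrom δ acc m ⊆ accFrom δ acc (dbaRun δ q₀ col (u 0)))
    (h1 : ∀ k, accFrom δ acc m ⊆
        accFrom δ acc (dstar δ m (seg col (u 0) (u k - u 0))))
    (h2 : ∀ k l, k < l → ∀ hne : seg col (u k) (u l - u k) ≠ [],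
        periodicW (seg col (u k) (u l - u k)) hne ∈ accFrom δ acc m) :
    col ∈ accFrom δ acc q₀ := by
  classical
  -- chunk transition property
  have key : ∀ k l : ℕ, k ≤ l →
      dstar δ (dstar δ m (seg col (u 0) (u k - u 0))) (seg col (u k) (u l - u k))
        = dstar δ m (seg col (u 0) (u l - u 0)) := by
    intro k l hkl
    have hk0 : u 0 ≤ u k := hu.monotone (Nat.zero_le k)
    have hkl' : u k ≤ u l := hu.monotone hkl
    have e1 : u 0 + (u k - u 0) = u k := by omega
    have e2 : (u k - u 0) + (u l - u k) = u l - u 0 := by omega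
    have hseg := seg_append col (u 0) (u k - u 0) (u l - u k)
    rw [e1, e2] at hseg
    rw [← dstar_append, hseg]
  -- pigeonhole a recurring value of the run started at `u 0`
  obtain ⟨p, hp⟩ := exists_io_fiber (Q := Q)
    (fun k => dstar δ m (seg col (u 0) (u k - u 0))) (fun _ => True)
    (fun N => ⟨N, le_rfl, trivial⟩)
  obtain ⟨r, hr, hrval⟩ := exists_subseq
    (fun k => dstar δ m (seg col (u 0) (u k - u 0)) = p) (fun N => by
      obtain ⟨t, ht, _, htv⟩ := hp N
      exact ⟨t, ht, htv⟩)
  set T : ℕ := u (r 0) with hT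
  -- the suffix from T is accepted from p
  have hcore : shiftW col T ∈ accFrom δ acc p := by
    intro N
    set i : ℕ := N + T with hi
    have hui : i ≤ u (r i) :=
      le_trans (StrictMono.le_apply hr) (StrictMono.le_apply hu)
    have hTu : T ≤ u (r i) := hu.monotone (hr.monotone (Nat.zero_le i))
    set Δ : ℕ := u (r i) - T with hΔ
    have hΔN : N ≤ Δ := by omega
    set B : List C := seg col (u (r i)) (u (r (i + 1)) - u (r i)) with hB
    have hlt : u (r i) < u (r (i + 1)) := hu (hr (by omega))
    have hBlen : B.length = u (r (i + 1)) - u (r i) := seg_length ..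
    have hBne : B ≠ [] := by
      intro hcon
      rw [hcon] at hBlen
      simp only [List.length_nil] at hBlen
      omega
    have hloop : dstar δ p B = p := by
      have h3 := key (r i) (r (i + 1)) (hr.monotone (by omega))
      rw [hrval i, hrval (i + 1)] at h3
      exact h3
    have hper : periodicW B hBne ∈ accFrom δ acc p := by
      have hmem := h2 (r i) (r (i + 1)) (hr (by omega)) hBne
      have hsub1 := h1 (r i)
      have hpe : dstar δ m (seg col (u 0) (u (r i) - u 0)) = p := hrval i
      rw [hpe] at hsub1
      exact hsub1 hmem
    obtain ⟨j, hj, hacc⟩ := loop_has_acc δ acc p B hBne hloop hper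
    have hj' : j < u (r (i + 1)) - u (r i) := by omega
    refine ⟨Δ + j, by omega, ?_⟩
    have hrun : dbaRun δ p (shiftW col T) (Δ + j) = dstar δ p (B.take j) := by
      rw [run_seg]
      have e3 : T + Δ = u (r i) := by omega
      have hsegsplit := seg_append col T Δ j
      rw [e3] at hsegsplit
      rw [← hsegsplit, dstar_append]
      have hfirst : dstar δ p (seg col T Δ) = p := by
        have h4 := key (r 0) (r i) (hr.monotone (Nat.zero_le i))
        rw [hrval 0, hrval i] at h4
        have e4 : u (r 0) - u 0 = T - u 0 := rfl
        exact h4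
      rw [hfirst]
      have htake : B.take j = seg col (u (r i)) j := seg_take col _ _ j (le_of_lt hj')
      rw [htake]
    have hw2 : B.get ⟨j, hj⟩ = col (u (r i) + j) := seg_get col (u (r i)) _ j hj
    have e_word : shiftW col T (Δ + j) = B.get ⟨j, hj⟩ := by
      rw [hw2]
      simp only [shiftW]
      congr 1
      omega
    rw [hrun, e_word]
    exact hacc
  -- transfer back to q₀
  have h00 : u 0 ≤ T := hu.monotone (Nat.zero_le (r 0))
  have hrunT : dbaRun δ q₀ col T
      = dstar δ (dbaRun δ q₀ col (u 0)) (seg col (u 0) (T - u 0)) := by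
    have e : u 0 + (T - u 0) = T := by omega
    have h5 : dbaRun δ q₀ col (u 0 + (T - u 0))
        = dstar δ (dbaRun δ q₀ col (u 0)) (seg col (u 0) (T - u 0)) := by
      rw [run_add, run_seg]
    rw [e] at h5
    exact h5
  have hpe0 : dstar δ m (seg col (u 0) (T - u 0)) = p := hrval 0
  have hsub : accFrom δ acc p ⊆ accFrom δ acc (dbaRun δ q₀ col T) := by
    rw [hrunT, ← hpe0]
    exact dstar_mono δ acc (seg col (u 0) (T - u 0)) m (dbaRun δ q₀ col (u 0)) h0
  rw [mem_accFrom_shift_iff δ acc q₀ col T]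
  exact hsub hcore
/- ========== Part 4: game machinery ========== -/

lemma histPref_succ {V : Type u} (p : ℕ → V) (col : ℕ → C) (n : ℕ) :
    histPref p col (n + 1) = histPref p col n ++ [(p n, col n)] := by
  simp [histPref, List.range_succ]

lemma periodicW_eq (w w' : List C) (h : w = w') (hw : w ≠ []) (hw' : w' ≠ []) :
    periodicW w hw = periodicW w' hw' := by subst h; rfl

section Game

variable {V : Type u} (E : Set (V × C × V)) (own1 : V → Prop)

/-- the set of pairs (vertex, state) from which Player 1 can win -/
def WinS : Set (V × Q) :=
  {x | ∃ τ : Strat C V, ValidStrat E own1 τ ∧ WinningFrom (accFrom δ acc x.2) E own1 τ x.1}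

/-- a good edge: loop-saturated Büchi transition into the winning region -/
def good (q : Q) (c : C) (v' : V) : Prop :=
  accS δ acc q c ∧ (v', δ q c) ∈ WinS δ acc E own1

/-- one step of the attractor-type operator -/
def Phi (Y : Set (V × Q)) : Set (V × Q) :=
  {x | (own1 x.1 → ∃ c v', (x.1, c, v') ∈ E ∧
          (good δ acc E own1 x.2 c v' ∨ (v', δ x.2 c) ∈ Y)) ∧
       (¬ own1 x.1 → ∀ c v', (x.1, c, v') ∈ E →
          (good δ acc E own1 x.2 c v' ∨ (v', δ x.2 c) ∈ Y))}

lemma Phi_mono {Y Y' : Set (V × Q)} (h : Y ⊆ Y') :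
    Phi δ acc E own1 Y ⊆ Phi δ acc E own1 Y' := by
  intro x hx
  refine ⟨fun ho => ?_, fun ho c v' he => ?_⟩
  · obtain ⟨c, v', he, hg⟩ := hx.1 ho
    exact ⟨c, v', he, hg.imp_right (fun hy => h hy)⟩
  · exact (hx.2 ho c v' he).imp_right (fun hy => h hy)

noncomputable def att : Ordinal.{u} → Set (V × Q) :=
  WellFounded.fix wellFounded_lt
    (fun o rec => Phi δ acc E own1 {x | ∃ o', ∃ h : o' < o, x ∈ rec o' h})

lemma att_eq (o : Ordinal.{u}) :
    att δ acc E own1 o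
      = Phi δ acc E own1 {x | ∃ o', ∃ _ : o' < o, x ∈ att δ acc E own1 o'} :=
  WellFounded.fix_eq _ _ _

/-- the full attractor -/
def Dset : Set (V × Q) := {x | ∃ o : Ordinal.{u}, x ∈ att δ acc E own1 o}

noncomputable def rank (x : V × Q) : Ordinal.{u} :=
  sInf {o | x ∈ att δ acc E own1 o}

lemma mem_att_rank {x : V × Q} (hx : x ∈ Dset δ acc E own1) :
    x ∈ att δ acc E own1 (rank δ acc E own1 x) :=
  csInf_mem hx

lemma rank_le {x : V × Q} {o : Ordinal.{u}} (h : x ∈ att δ acc E own1 o) :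
    rank δ acc E own1 x ≤ o :=
  csInf_le' h

lemma att_sub_D (o : Ordinal.{u}) : att δ acc E own1 o ⊆ Dset δ acc E own1 :=
  fun x hx => ⟨o, hx⟩

lemma Dset_closed : Phi δ acc E own1 (Dset δ acc E own1) ⊆ Dset δ acc E own1 := by
  classical
  intro x hx
  by_cases ho : own1 x.1
  · obtain ⟨c, v', he, hg⟩ := hx.1 ho
    rcases hg with hgood | ⟨o, hmem⟩
    · refine ⟨0, ?_⟩
      rw [att_eq]
      exact ⟨fun _ => ⟨c, v', he, Or.inl hgood⟩, fun hno => absurd ho hno⟩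
    · refine ⟨Order.succ o, ?_⟩
      rw [att_eq]
      refine ⟨fun _ => ⟨c, v', he, Or.inr ⟨o, Order.lt_succ o, hmem⟩⟩, fun hno => absurd ho hno⟩
  · -- P2 vertex: take the sup of ranks of successors
    set f : C × V → Ordinal.{u} := fun cv =>
      if h : (cv.2, δ x.2 cv.1) ∈ Dset δ acc E own1
      then rank δ acc E own1 (cv.2, δ x.2 cv.1) else 0 with hf
    refine ⟨Order.succ (iSup f), ?_⟩
    rw [att_eq]
    refine ⟨fun ho' => absurd ho' ho, fun _ c v' he => ?_⟩
    rcases hx.2 ho c v' he with hgood | hD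
    · exact Or.inl hgood
    · refine Or.inr ⟨f (c, v'), ?_, ?_⟩
      · exact lt_of_le_of_lt (le_ciSup (Ordinal.bddAbove_range f) (c, v')) (Order.lt_succ _)
      · have : f (c, v') = rank δ acc E own1 (v', δ x.2 c) := by
          rw [hf]; simp only []; rw [dif_pos hD]
        rw [this]
        exact mem_att_rank δ acc E own1 hD

/-- residual of a winning strategy along a consistent play is winning -/
lemma residual (q : Q) (τ : Strat C V) (hτv : ValidStrat E own1 τ)
    (v : V) (hτw : WinningFrom (accFrom δ acc q) E own1 τ v)
    (p : ℕ → V) (col : ℕ → C) (hplay : IsPlay E p col) (hp0 : p 0 = v)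
    (hcons : ConsistentPlay own1 τ p col) (n : ℕ) :
    (p n, dbaRun δ q col n) ∈ WinS δ acc E own1 := by
  classical
  refine ⟨fun h w => τ (histPref p col n ++ h) w, fun h w hw => hτv _ w hw, ?_⟩
  intro p' col' hplay' hp0' hcons'
  set P : ℕ → V := fun k => if k < n then p k else p' (k - n) with hP
  set COL : ℕ → C := fun k => if k < n then col k else col' (k - n) with hCOL
  have hPlt : ∀ k, k < n → P k = p k := by intro k hk; simp [hP, hk]
  have hPge : ∀ k, n ≤ k → P k = p' (k - n) := by
    intro k hk; simp [hP, Nat.not_lt.mpr hk]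
  have hPle : ∀ k, k ≤ n → P k = p k := by
    intro k hk
    rcases Nat.lt_or_ge k n with h | h
    · exact hPlt k h
    · have hkn : k = n := by omega
      subst hkn
      rw [hPge k le_rfl, Nat.sub_self, hp0']
  have hClt : ∀ k, k < n → COL k = col k := by intro k hk; simp [hCOL, hk]
  have hCge : ∀ k, n ≤ k → COL k = col' (k - n) := by
    intro k hk; simp [hCOL, Nat.not_lt.mpr hk]
  have hIsPlay : IsPlay E P COL := by
    intro k
    rcases Nat.lt_or_ge k n with h | h
    · rw [hPlt k h, hClt k h, hPle (k + 1) (by omega)]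
      exact hplay k
    · rw [hPge k h, hCge k h, hPge (k + 1) (by omega)]
      have : k + 1 - n = (k - n) + 1 := by omega
      rw [this]
      exact hplay' (k - n)
  have hP0 : P 0 = v := by rw [hPle 0 (Nat.zero_le n), hp0]
  have hhist : ∀ k, k ≤ n → histPref P COL k = histPref p col k := by
    intro k hk
    unfold histPref
    apply List.map_congr_left
    intro i hi
    have hik : i < k := List.mem_range.mp hi
    rw [hPlt i (by omega), hClt i (by omega)]
  have hhist2 : ∀ j, histPref P COL (n + j) = histPref p col n ++ histPref p' col' j := by
    intro j
    induction j with
    | zero => simpa [histPref] using hhist n le_rfl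
    | succ j ih =>
        have e : n + (j + 1) = (n + j) + 1 := by omega
        rw [e, histPref_succ, ih, histPref_succ, List.append_assoc]
        congr 2
        rw [hPge (n + j) (by omega), hCge (n + j) (by omega)]
        have e2 : n + j - n = j := by omega
        rw [e2]
  have hconsP : ConsistentPlay own1 τ P COL := by
    intro k hk
    rcases Nat.lt_or_ge k n with h | h
    · rw [hPlt k h] at hk
      have := hcons k hk
      rw [hClt k h, hPle (k + 1) (by omega), hhist k (by omega), hPlt k h]
      exact this
    · obtain ⟨j, rfl⟩ : ∃ j, k = n + j := ⟨k - n, by omega⟩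
      rw [hPge (n + j) (by omega)] at hk
      have e : n + j - n = j := by omega
      rw [e] at hk
      rw [hCge (n + j) (by omega), hPge (n + j + 1) (by omega), hPge (n + j) (by omega)]
      have e2 : n + j + 1 - n = j + 1 := by omega
      rw [e, e2, hhist2 j]
      exact hcons' j hk
  have hCOLmem : COL ∈ accFrom δ acc q := hτw P COL hIsPlay hP0 hconsP
  have hagree : ∀ k, k ≤ n → dbaRun δ q COL k = dbaRun δ q col k := by
    intro k hk
    induction k with
    | zero => rfl
    | succ k ih =>
        show δ (dbaRun δ q COL k) (COL k) = δ (dbaRun δ q col k) (col k)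
        rw [ih (by omega), hClt k (by omega)]
  have hshift : shiftW COL n = col' := by
    funext k
    rw [shiftW, hCge (n + k) (by omega)]
    congr 1
    omega
  rw [mem_accFrom_shift_iff δ acc q COL n, hshift, hagree n le_rfl] at hCOLmem
  exact hCOLmem

/-- the winning region is contained in the attractor (spoiling argument) -/
lemma WinS_sub_D (hnb : ∀ w : V, ∃ c v', (w, c, v') ∈ E) :
    WinS δ acc E own1 ⊆ Dset δ acc E own1 := by
  classical
  rintro ⟨v, q⟩ hx
  by_contra hxD
  obtain ⟨τ, hτv, hτw⟩ := hx
  have hdef : ∀ w : V, ∃ cv : C × V, (w, cv.1, cv.2) ∈ E := by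
    intro w
    obtain ⟨c, v', h⟩ := hnb w
    exact ⟨(c, v'), h⟩
  set pairF : List (V × C) → V → C × V := fun h w =>
    if own1 w then τ h w
    else if hex : ∃ cv : C × V, (w, cv.1, cv.2) ∈ E ∧
        ¬ good δ acc E own1 (dstar δ q (h.map Prod.snd)) cv.1 cv.2 ∧
        ((cv.2, δ (dstar δ q (h.map Prod.snd)) cv.1) ∉ Dset δ acc E own1)
      then hex.choose else (hdef w).choose with hpairF
  set S : ℕ → List (V × C) × V := fun t => Nat.rec (([], v) : List (V × C) × V)
    (fun _ s => (s.1 ++ [(s.2, (pairF s.1 s.2).1)], (pairF s.1 s.2).2)) t with hS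
  set p : ℕ → V := fun t => (S t).2 with hp
  set col : ℕ → C := fun t => (pairF (S t).1 (S t).2).1 with hcol
  have hp0 : p 0 = v := rfl
  have hhist : ∀ t, (S t).1 = histPref p col t := by
    intro t
    induction t with
    | zero => rfl
    | succ t ih =>
        have h6 : (S (t + 1)).1 = (S t).1 ++ [(p t, col t)] := rfl
        rw [h6, histPref_succ, ih]
  have hstate : ∀ t, dstar δ q (((S t).1).map Prod.snd) = dbaRun δ q col t := by
    intro t
    rw [hhist t, run_seg0]
    congr 1
    simp [histPref, seg, List.map_map, Function.comp]
  have hplay : IsPlay E p col := by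
    intro t
    show ((S t).2, (pairF (S t).1 (S t).2).1, (pairF (S t).1 (S t).2).2) ∈ E
    by_cases ho : own1 (S t).2
    · have h1 : pairF (S t).1 (S t).2 = τ (S t).1 (S t).2 := by
        rw [hpairF]
        simp only [if_pos ho]
      rw [h1]
      exact hτv (S t).1 (S t).2 ho
    · by_cases hex : ∃ cv : C × V, ((S t).2, cv.1, cv.2) ∈ E ∧
          ¬ good δ acc E own1 (dstar δ q (((S t).1).map Prod.snd)) cv.1 cv.2 ∧
          ((cv.2, δ (dstar δ q (((S t).1).map Prod.snd)) cv.1) ∉ Dset δ acc E own1)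
      · have h1 : pairF (S t).1 (S t).2 = hex.choose := by
          rw [hpairF]; simp only [if_neg ho]; rw [dif_pos hex]
        rw [h1]
        exact hex.choose_spec.1
      · have h1 : pairF (S t).1 (S t).2 = (hdef (S t).2).choose := by
          rw [hpairF]; simp only [if_neg ho]; rw [dif_neg hex]
        rw [h1]
        exact (hdef (S t).2).choose_spec
  have hcons : ConsistentPlay own1 τ p col := by
    intro t hk
    show ((pairF (S t).1 (S t).2).1, (pairF (S t).1 (S t).2).2) = τ (histPref p col t) (S t).2
    rw [← hhist t]
    have h1 : pairF (S t).1 (S t).2 = τ (S t).1 (S t).2 := by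
      rw [hpairF]; exact if_pos hk
    rw [h1]
  have hnotD : ∀ t, (p t, dbaRun δ q col t) ∉ Dset δ acc E own1 := by
    intro t
    induction t with
    | zero => exact hxD
    | succ t ih =>
        by_cases ho : own1 (S t).2
        · intro hDnext
          apply ih
          apply Dset_closed δ acc E own1
          exact ⟨fun _ => ⟨col t, p (t + 1), hplay t, Or.inr hDnext⟩,
            fun hno => absurd ho hno⟩
        · have hnPhi : (p t, dbaRun δ q col t) ∉ Phi δ acc E own1 (Dset δ acc E own1) :=
            fun hmem => ih (Dset_closed δ acc E own1 hmem)
          have hex : ∃ cv : C × V, ((S t).2, cv.1, cv.2) ∈ E ∧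
              ¬ good δ acc E own1 (dstar δ q (((S t).1).map Prod.snd)) cv.1 cv.2 ∧
              ((cv.2, δ (dstar δ q (((S t).1).map Prod.snd)) cv.1) ∉ Dset δ acc E own1) := by
            by_contra hcon
            push_neg at hcon
            apply hnPhi
            refine ⟨fun ho' => absurd ho' ho, fun _ c v' he => ?_⟩
            have h5 := hcon (c, v') he
            rw [hstate t] at h5
            by_cases hg : good δ acc E own1 (dbaRun δ q col t) c v'
            · exact Or.inl hg
            · exact Or.inr (h5 hg)
          have h1 : pairF (S t).1 (S t).2 = hex.choose := by
            rw [hpairF]; simp only [if_neg ho]; rw [dif_pos hex]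
          show ((pairF (S t).1 (S t).2).2,
            δ (dbaRun δ q col t) ((pairF (S t).1 (S t).2).1)) ∉ Dset δ acc E own1
          rw [h1, ← hstate t]
          exact hex.choose_spec.2.2
  have hngood : ∀ t, ¬ good δ acc E own1 (dbaRun δ q col t) (col t) (p (t + 1)) := by
    intro t hg
    by_cases ho : own1 (S t).2
    · exact hnotD t (Dset_closed δ acc E own1
        ⟨fun _ => ⟨col t, p (t + 1), hplay t, Or.inl hg⟩, fun hno => absurd ho hno⟩)
    · have hex : ∃ cv : C × V, ((S t).2, cv.1, cv.2) ∈ E ∧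
          ¬ good δ acc E own1 (dstar δ q (((S t).1).map Prod.snd)) cv.1 cv.2 ∧
          ((cv.2, δ (dstar δ q (((S t).1).map Prod.snd)) cv.1) ∉ Dset δ acc E own1) := by
        by_contra hcon
        push_neg at hcon
        apply hnotD t
        apply Dset_closed δ acc E own1
        refine ⟨fun ho' => absurd ho' ho, fun _ c v' he => ?_⟩
        have h5 := hcon (c, v') he
        rw [hstate t] at h5
        by_cases hgg : good δ acc E own1 (dbaRun δ q col t) c v'
        · exact Or.inl hgg
        · exact Or.inr (h5 hgg)
      have h1 : pairF (S t).1 (S t).2 = hex.choose := by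
        rw [hpairF]; simp only [if_neg ho]; rw [dif_pos hex]
      have h2 : col t = hex.choose.1 := by
        show (pairF (S t).1 (S t).2).1 = _
        rw [h1]
      have h3 : p (t + 1) = hex.choose.2 := by
        show (pairF (S t).1 (S t).2).2 = _
        rw [h1]
      rw [h2, h3, ← hstate t] at hg
      exact hex.choose_spec.2.1 hg
  have hcolmem : col ∈ accFrom δ acc q := hτw p col hplay hp0 hcons
  obtain ⟨n, _, hacc⟩ := hcolmem 0
  apply hngood n
  constructor
  · exact acc_mem_accS δ acc _ _ hacc
  · exact residual δ acc E own1 q τ hτv v hτw p col hplay hp0 hcons (n + 1)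

end Game
/- ========== Part 5: the positional strategy and master theorem ========== -/

section Game2

attribute [local instance] Classical.propDecidable

variable {V : Type u} (E : Set (V × C × V)) (own1 : V → Prop)

noncomputable def mfun [Fintype Q]
    (htot' : ∀ q q' : Q, accFrom δ acc q ⊆ accFrom δ acc q' ∨
      accFrom δ acc q' ⊆ accFrom δ acc q)
    (qdef : Q) (v : V) : Q :=
  if h : ∃ qq : Q, (v, qq) ∈ Dset δ acc E own1
  then (exists_least δ acc htot' {qq | (v, qq) ∈ Dset δ acc E own1} h).choose
  else qdef

lemma mfun_spec [Fintype Q]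
    (htot' : ∀ q q' : Q, accFrom δ acc q ⊆ accFrom δ acc q' ∨
      accFrom δ acc q' ⊆ accFrom δ acc q)
    (qdef : Q) (v : V) (h : ∃ qq : Q, (v, qq) ∈ Dset δ acc E own1) :
    (v, mfun δ acc E own1 htot' qdef v) ∈ Dset δ acc E own1 ∧
    ∀ q' : Q, (v, q') ∈ Dset δ acc E own1 →
      accFrom δ acc (mfun δ acc E own1 htot' qdef v) ⊆ accFrom δ acc q' := by
  have hh := (exists_least δ acc htot' {qq | (v, qq) ∈ Dset δ acc E own1} h).choose_spec
  rw [mfun, dif_pos h]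
  exact hh

lemma exists_step [Fintype Q] (hnb : ∀ w : V, ∃ c v', (w, c, v') ∈ E)
    (v : V) (qq : Q) (ho : own1 v) (hd : (v, qq) ∈ Dset δ acc E own1) :
    ∃ cv : C × V, (v, cv.1, cv.2) ∈ E ∧
      ((good δ acc E own1 qq cv.1 cv.2 ∨
        rank δ acc E own1 (cv.2, δ qq cv.1) < rank δ acc E own1 (v, qq)) ∧
       (cv.2, δ qq cv.1) ∈ Dset δ acc E own1) := by
  have hmem := mem_att_rank δ acc E own1 hd
  rw [att_eq] at hmem
  obtain ⟨c, v', he, hg⟩ := hmem.1 ho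
  rcases hg with hgood | ⟨o', ho', hm⟩
  · exact ⟨(c, v'), he, Or.inl hgood, WinS_sub_D δ acc E own1 hnb hgood.2⟩
  · exact ⟨(c, v'), he,
      Or.inr (lt_of_le_of_lt (rank_le δ acc E own1 hm) ho'), ⟨o', hm⟩⟩

noncomputable def pick [Fintype Q] (hnb : ∀ w : V, ∃ c v', (w, c, v') ∈ E)
    (htot' : ∀ q q' : Q, accFrom δ acc q ⊆ accFrom δ acc q' ∨
      accFrom δ acc q' ⊆ accFrom δ acc q)
    (qdef : Q) (v : V) : C × V :=
  if h : own1 v ∧ (v, mfun δ acc E own1 htot' qdef v) ∈ Dset δ acc E own1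
  then (exists_step δ acc E own1 hnb v _ h.1 h.2).choose
  else ((hnb v).choose, (hnb v).choose_spec.choose)

lemma pick_edge [Fintype Q] (hnb : ∀ w : V, ∃ c v', (w, c, v') ∈ E)
    (htot' : ∀ q q' : Q, accFrom δ acc q ⊆ accFrom δ acc q' ∨
      accFrom δ acc q' ⊆ accFrom δ acc q)
    (qdef : Q) (v : V) :
    (v, (pick δ acc E own1 hnb htot' qdef v).1, (pick δ acc E own1 hnb htot' qdef v).2) ∈ E := by
  rw [pick]
  by_cases h : own1 v ∧ (v, mfun δ acc E own1 htot' qdef v) ∈ Dset δ acc E own1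
  · rw [dif_pos h]
    exact (exists_step δ acc E own1 hnb v _ h.1 h.2).choose_spec.1
  · rw [dif_neg h]
    exact (hnb v).choose_spec.choose_spec

lemma pick_spec [Fintype Q] (hnb : ∀ w : V, ∃ c v', (w, c, v') ∈ E)
    (htot' : ∀ q q' : Q, accFrom δ acc q ⊆ accFrom δ acc q' ∨
      accFrom δ acc q' ⊆ accFrom δ acc q)
    (qdef : Q) (v : V) (ho : own1 v)
    (hd : (v, mfun δ acc E own1 htot' qdef v) ∈ Dset δ acc E own1) :
    (good δ acc E own1 (mfun δ acc E own1 htot' qdef v)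
        (pick δ acc E own1 hnb htot' qdef v).1 (pick δ acc E own1 hnb htot' qdef v).2 ∨
      rank δ acc E own1 ((pick δ acc E own1 hnb htot' qdef v).2,
        δ (mfun δ acc E own1 htot' qdef v) (pick δ acc E own1 hnb htot' qdef v).1)
        < rank δ acc E own1 (v, mfun δ acc E own1 htot' qdef v)) ∧
    ((pick δ acc E own1 hnb htot' qdef v).2,
      δ (mfun δ acc E own1 htot' qdef v) (pick δ acc E own1 hnb htot' qdef v).1)
      ∈ Dset δ acc E own1 := by
  have h : own1 v ∧ (v, mfun δ acc E own1 htot' qdef v) ∈ Dset δ acc E own1 := ⟨ho, hd⟩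
  rw [pick, dif_pos h]
  exact (exists_step δ acc E own1 hnb v _ h.1 h.2).choose_spec.2

noncomputable def sigma [Fintype Q] (hnb : ∀ w : V, ∃ c v', (w, c, v') ∈ E)
    (htot' : ∀ q q' : Q, accFrom δ acc q ⊆ accFrom δ acc q' ∨
      accFrom δ acc q' ⊆ accFrom δ acc q)
    (qdef : Q) : Strat C V :=
  fun _ v => pick δ acc E own1 hnb htot' qdef v

theorem master [Fintype Q] (hnb : ∀ w : V, ∃ c v', (w, c, v') ∈ E)
    (htot' : ∀ q q' : Q, accFrom δ acc q ⊆ accFrom δ acc q' ∨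
      accFrom δ acc q' ⊆ accFrom δ acc q)
    (W : Set (ℕ → C)) (qinit : Q) (hL : accFrom δ acc qinit = W)
    (hreach : ∀ q : Q, ∃ w : List C, dstar δ qinit w = q)
    (hinj : ∀ q q' : Q, accFrom δ acc q = accFrom δ acc q' → q = q')
    (hpc : ProgressConsistent W)
    (v : V) (hwin : (v, qinit) ∈ WinS δ acc E own1) :
    WinningFrom (accFrom δ acc qinit) E own1 (sigma δ acc E own1 hnb htot' qinit) v := by
  intro p col hplay hp0 hcons
  set M : ℕ → Q := fun t => mfun δ acc E own1 htot' qinit (p t) with hM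
  have step : ∀ t, (p t, M t) ∈ Dset δ acc E own1 →
      (good δ acc E own1 (M t) (col t) (p (t + 1)) ∨
        rank δ acc E own1 (p (t + 1), δ (M t) (col t)) < rank δ acc E own1 (p t, M t)) ∧
      (p (t + 1), δ (M t) (col t)) ∈ Dset δ acc E own1 := by
    intro t hD
    by_cases ho : own1 (p t)
    · have hc := hcons t ho
      have h1 : col t = (pick δ acc E own1 hnb htot' qinit (p t)).1 := congrArg Prod.fst hc
      have h2 : p (t + 1) = (pick δ acc E own1 hnb htot' qinit (p t)).2 := congrArg Prod.snd hc
      rw [h1, h2]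
      exact pick_spec δ acc E own1 hnb htot' qinit (p t) ho hD
    · have hmem := mem_att_rank δ acc E own1 hD
      rw [att_eq] at hmem
      rcases hmem.2 ho (col t) (p (t + 1)) (hplay t) with hgd | ⟨o', ho', hm⟩
      · exact ⟨Or.inl hgd, WinS_sub_D δ acc E own1 hnb hgd.2⟩
      · exact ⟨Or.inr (lt_of_le_of_lt (rank_le δ acc E own1 hm) ho'), ⟨o', hm⟩⟩
  have inv : ∀ t, (p t, M t) ∈ Dset δ acc E own1 ∧
      accFrom δ acc (M t) ⊆ accFrom δ acc (dbaRun δ qinit col t) := by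
    intro t
    induction t with
    | zero =>
        have hD0 : (p 0, qinit) ∈ Dset δ acc E own1 := by
          rw [hp0]; exact WinS_sub_D δ acc E own1 hnb hwin
        have hms := mfun_spec δ acc E own1 htot' qinit (p 0) ⟨qinit, hD0⟩
        exact ⟨hms.1, hms.2 qinit hD0⟩
    | succ t ih =>
        have hst := step t ih.1
        have hms := mfun_spec δ acc E own1 htot' qinit (p (t + 1)) ⟨_, hst.2⟩
        refine ⟨hms.1, subset_trans (hms.2 _ hst.2) ?_⟩
        exact delta_mono δ acc (M t) (dbaRun δ qinit col t) (col t) ih.2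
  have hMle : ∀ t, accFrom δ acc (M (t + 1)) ⊆ accFrom δ acc (δ (M t) (col t)) := by
    intro t
    have hst := step t (inv t).1
    exact (mfun_spec δ acc E own1 htot' qinit (p (t + 1)) ⟨_, hst.2⟩).2 _ hst.2
  have hdom : ∀ a j, accFrom δ acc (M (a + j)) ⊆
      accFrom δ acc (dstar δ (M a) (seg col a j)) := by
    intro a j
    induction j with
    | zero => exact subset_rfl
    | succ j ih =>
        have e : a + (j + 1) = (a + j) + 1 := by omega
        rw [e, seg_succ, dstar_append, dstar_singleton]
        exact subset_trans (hMle (a + j)) (delta_mono δ acc _ _ _ ih)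
  have hio : (∀ N, ∃ t, N ≤ t ∧ good δ acc E own1 (M t) (col t) (p (t + 1))) ∨
      (∀ N, ∃ t, N ≤ t ∧ M (t + 1) ≠ δ (M t) (col t)) := by
    by_contra hcon
    push_neg at hcon
    obtain ⟨h1, h2⟩ := hcon
    obtain ⟨N₁, hN₁⟩ := h1
    obtain ⟨N₂, hN₂⟩ := h2
    apply no_desc (fun k => rank δ acc E own1 (p (max N₁ N₂ + k), M (max N₁ N₂ + k)))
    intro k
    have hng := hN₁ (max N₁ N₂ + k) (by omega)
    have hnd := hN₂ (max N₁ N₂ + k) (by omega)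
    have hst := step (max N₁ N₂ + k) (inv (max N₁ N₂ + k)).1
    rcases hst.1 with hgd | hlt
    · exact absurd hgd hng
    · have e : max N₁ N₂ + (k + 1) = (max N₁ N₂ + k) + 1 := by omega
      rw [e, hnd]
      exact hlt
  rcases hio with hgood | hdrop
  · -- Case A: infinitely many good (saturated Büchi) steps
    obtain ⟨mhat, hmh⟩ := exists_io_fiber M
      (fun t => good δ acc E own1 (M t) (col t) (p (t + 1))) hgood
    obtain ⟨u, hu, hup⟩ := exists_subseq
      (fun t => good δ acc E own1 (M t) (col t) (p (t + 1)) ∧ M t = mhat)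
      (fun N => by obtain ⟨t, h1, h2, h3⟩ := hmh N; exact ⟨t, h1, h2, h3⟩)
    apply endgame δ acc qinit mhat col u hu
    · rw [← (hup 0).2]; exact (inv (u 0)).2
    · intro k
      have hk0 : u 0 ≤ u k := hu.monotone (Nat.zero_le k)
      have e : u 0 + (u k - u 0) = u k := by omega
      have hd := hdom (u 0) (u k - u 0)
      rw [e, (hup k).2, (hup 0).2] at hd
      exact hd
    · intro k l hkl hne
      have hkl' : u k ≤ u l := le_of_lt (hu hkl)
      have e : u k + (u l - u k) = u l := by omega
      have hd := hdom (u k) (u l - u k)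
      rw [e, (hup l).2, (hup k).2] at hd
      by_cases hdm : dstar δ mhat (seg col (u k) (u l - u k)) = mhat
      · have haccS : accS δ acc mhat (col (u k)) := by
          have h7 := (hup k).1.1
          rw [(hup k).2] at h7
          exact h7
        have hlt9 : u k < u l := hu hkl
        have e2 : u l - u k = (u l - u k - 1) + 1 := by omega
        have hcons0 : seg col (u k) (u l - u k)
            = col (u k) :: seg col (u k + 1) (u l - u k - 1) := by
          conv_lhs => rw [e2]
          rw [seg_cons]
        have hne2 : (col (u k) :: seg col (u k + 1) (u l - u k - 1) : List C) ≠ [] := by simp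
        rw [periodicW_eq _ _ hcons0 hne hne2]
        apply haccS
        rw [← hcons0]
        exact hdm
      · exact pc_loop δ acc W qinit hL hreach hinj hpc mhat _ hne hd
          (fun hh => hdm hh.symm)
  · -- Case B: infinitely many drops
    obtain ⟨mhat, hmh⟩ := exists_io_fiber (fun t => M (t + 1))
      (fun t => M (t + 1) ≠ δ (M t) (col t)) hdrop
    obtain ⟨ts, hts, htsp⟩ := exists_subseq
      (fun t => M (t + 1) ≠ δ (M t) (col t) ∧ M (t + 1) = mhat)
      (fun N => by obtain ⟨t, h1, h2, h3⟩ := hmh N; exact ⟨t, h1, h2, h3⟩)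
    set u : ℕ → ℕ := fun k => ts k + 1 with hudef
    have hu : StrictMono u := by
      intro a b h
      show ts a + 1 < ts b + 1
      exact Nat.succ_lt_succ (hts h)
    have hMu : ∀ k, M (u k) = mhat := fun k => (htsp k).2
    apply endgame δ acc qinit mhat col u hu
    · rw [← hMu 0]; exact (inv (u 0)).2
    · intro k
      have hk0 : u 0 ≤ u k := hu.monotone (Nat.zero_le k)
      have e : u 0 + (u k - u 0) = u k := by omega
      have hd := hdom (u 0) (u k - u 0)
      rw [e, hMu k, hMu 0] at hd
      exact hd
    · intro k l hkl hne
      have e9 : u l = ts l + 1 := rfl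
      have e8 : u k < u l := hu hkl
      have hkl2 : u k ≤ ts l := by omega
      have hd1 := hdom (u k) (ts l - u k)
      have e : u k + (ts l - u k) = ts l := by omega
      rw [e, hMu k] at hd1
      have hd2 : accFrom δ acc (δ (M (ts l)) (col (ts l))) ⊆
          accFrom δ acc (dstar δ mhat (seg col (u k) (u l - u k))) := by
        have e2 : u l - u k = (ts l - u k) + 1 := by omega
        rw [e2, seg_succ, dstar_append, dstar_singleton, e]
        exact delta_mono δ acc _ _ _ hd1
      have hq2 : accFrom δ acc mhat ⊆ accFrom δ acc (δ (M (ts l)) (col (ts l))) := by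
        rw [← hMu l]
        exact hMle (ts l)
      have hsub : accFrom δ acc mhat ⊆
          accFrom δ acc (dstar δ mhat (seg col (u k) (u l - u k))) :=
        subset_trans hq2 hd2
      have hne2 : mhat ≠ dstar δ mhat (seg col (u k) (u l - u k)) := by
        intro hh
        have hni := (htsp l).1
        have hq1 : accFrom δ acc (δ (M (ts l)) (col (ts l))) ⊆ accFrom δ acc mhat := by
          rw [hh]; exact hd2
        have heq := hinj _ _ (subset_antisymm hq2 hq1)
        apply hni
        have hMl : M (ts l + 1) = mhat := hMu l
        rw [hMl]
        exact heq
      exact pc_loop δ acc W qinit hL hreach hinj hpc mhat _ hne hsub hne2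

end Game2

end Stmt16Aux
/-- an objective with total prefix preorder, progress-consistent, and
recognized by a DBA built on top of its prefix-classifier (all states reachable, distinct
states inequivalent) is half-positional over all arenas of any cardinality. -/
theorem stmt16 {C : Type} (W : Set (ℕ → C))
    (htot : ∀ w₁ w₂ : List C, winCont W w₁ ⊆ winCont W w₂ ∨ winCont W w₂ ⊆ winCont W w₁)
    (hpc : ProgressConsistent W)
    (hrec : ∃ (Q : Type) (_ : Fintype Q) (qinit : Q) (δ : Q → C → Q) (acc : Q → C → Prop),
      accFrom δ acc qinit = W ∧ (∀ q : Q, ∃ w : List C, dstar δ qinit w = q) ∧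
        (∀ q q' : Q, accFrom δ acc q = accFrom δ acc q' → q = q')) :
    HalfPositionalAll.{u} W := by
  intro V E own1 hnb
  obtain ⟨Q, hF, qinit, δ, acc, hL, hreach, hinj⟩ := hrec
  letI : Fintype Q := hF
  have htot' : ∀ q q' : Q, accFrom δ acc q ⊆ accFrom δ acc q' ∨
      accFrom δ acc q' ⊆ accFrom δ acc q := by
    intro q q'
    obtain ⟨w, hw⟩ := hreach q
    obtain ⟨w', hw'⟩ := hreach q'
    have h := htot w w'
    rw [Stmt16Aux.winCont_eq δ acc W qinit hL w, Stmt16Aux.winCont_eq δ acc W qinit hL w',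
      hw, hw'] at h
    exact h
  refine ⟨Stmt16Aux.sigma δ acc E own1 hnb htot' qinit, ?_, ?_, ?_⟩
  · intro h v hv
    exact Stmt16Aux.pick_edge δ acc E own1 hnb htot' qinit v
  · intro h h' v
    rfl
  · intro v hv
    rw [← hL] at hv
    rw [← hL]
    exact Stmt16Aux.master δ acc E own1 hnb htot' W qinit hL hreach hinj hpc v hv
end

section
/- If an objective W ⊆ C^ω is strongly selective, then it is progress-consistent. -/
/-- `[M]`: infinite words whose every finite prefix is a prefix of a word of `M`. -/
def limitLang {C : Type} (M : Language C) : Set (ℕ → C) :=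
  {s | ∀ k : ℕ, ∃ m ∈ M, ((List.range k).map s) <+: m}

lemma extWord_append {C : Type} (u v : List C) (s : ℕ → C) :
    extWord (u ++ v) s = extWord u (extWord v s) := by
  funext n
  simp only [extWord, List.length_append, List.get_eq_getElem]
  by_cases h1 : n < u.length
  · rw [dif_pos (by omega), dif_pos h1, List.getElem_append_left h1]
  · rw [dif_neg h1]
    by_cases h2 : n < u.length + v.length
    · rw [dif_pos h2, dif_pos (by omega), List.getElem_append_right (le_of_not_gt h1)]
    · rw [dif_neg h2, dif_neg (by omega)]
      congr 1; omega

lemma map_range_extWord {C : Type} (w : List C) (s : ℕ → C) (k : ℕ) :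
    (List.range (w.length + k)).map (extWord w s) = w ++ (List.range k).map s := by
  apply List.ext_getElem
  · simp
  intro n h1 h2
  by_cases h : n < w.length <;>
    simp [extWord, List.getElem_append, h]

lemma prefix_agree {C : Type} {t s : ℕ → C} {k m : ℕ}
    (h : (List.range k).map t <+: (List.range m).map s) : ∀ n < k, t n = s n := by
  intro n hn
  have := h.getElem (i := n) (by simpa using hn)
  simpa using this

lemma mem_star_singleton {C : Type} {w m : List C}
    (h : m ∈ KStar.kstar ({w} : Language C)) :
    ∃ j, m = (List.replicate j w).flatten := by
  rw [Language.mem_kstar] at h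
  obtain ⟨L, rfl, hL⟩ := h
  exact ⟨L.length, congrArg List.flatten
    (List.eq_replicate_iff.mpr ⟨rfl, fun b hb => hL b hb⟩)⟩

lemma flatten_replicate_getElem {C : Type} (w : List C) (hw : w ≠ []) (j : ℕ) :
    ∀ i (h : i < ((List.replicate j w).flatten).length),
    ((List.replicate j w).flatten)[i] =
      w[i % w.length]'(Nat.mod_lt i (List.length_pos_iff.mpr hw)) := by
  induction j with
  | zero => intro i h; simp at h
  | succ j ih =>
    intro i h
    show (w ++ (List.replicate j w).flatten)[i]'(by simpa [List.replicate_succ] using h) = _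
    by_cases hi : i < w.length
    · rw [List.getElem_append_left hi]
      congr 1
      exact (Nat.mod_eq_of_lt hi).symm
    · rw [List.getElem_append_right (le_of_not_gt hi), ih]
      congr 1
      exact (Nat.mod_eq_sub_mod (le_of_not_gt hi)).symm

lemma limit_star_singleton {C : Type} {w : List C} (hw : w ≠ []) {t : ℕ → C}
    (ht : t ∈ limitLang (KStar.kstar ({w} : Language C))) : t = periodicW w hw := by
  funext n
  obtain ⟨m, hm, hpre⟩ := ht (n + 1)
  obtain ⟨j, rfl⟩ := mem_star_singleton hm
  have hn : n < ((List.range (n+1)).map t).length := by simp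
  have h1 := hpre.getElem hn
  have hlen : n < ((List.replicate j w).flatten).length :=
    lt_of_lt_of_le (by simp) hpre.length_le
  rw [flatten_replicate_getElem w hw j n hlen] at h1
  simpa [periodicW] using h1

lemma limit_prefixes {C : Type} {s t : ℕ → C}
    (ht : t ∈ limitLang {l : List C | ∃ k, l = (List.range k).map s}) : t = s := by
  funext n
  obtain ⟨m, ⟨j, rfl⟩, hpre⟩ := ht (n + 1)
  exact prefix_agree hpre n (by omega)

/-- a strongly selective objective is progress-consistent. -/
theorem stmt18 {C : Type} (W : Set (ℕ → C))
    (hsel : ∀ (M N K : Language C) (w : List C),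
      ((extWord w '' limitLang (KStar.kstar (M + N) * K)) ∩ W).Nonempty →
      ((extWord w '' (limitLang (KStar.kstar M) ∪ limitLang (KStar.kstar N) ∪ limitLang K)) ∩ W).Nonempty) :
    ProgressConsistent W := by
  intro w₁ w₂ hne hss
  obtain ⟨s, hs1, hs2⟩ := Set.exists_of_ssubset hss
  set K : Language C := {l : List C | ∃ k, l = (List.range k).map s} with hK
  have hne' : ((extWord w₁ '' limitLang (KStar.kstar (({w₂} : Language C) + {w₂}) * K)) ∩ W).Nonempty := by
    refine ⟨extWord w₁ (extWord w₂ s), ⟨extWord w₂ s, ?_, rfl⟩, ?_⟩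
    · intro k
      refine ⟨w₂ ++ (List.range k).map s, ?_, ?_⟩
      · rw [Language.mem_mul]
        refine ⟨w₂, ?_, (List.range k).map s, ⟨k, rfl⟩, rfl⟩
        rw [Language.mem_kstar]
        refine ⟨[w₂], by simp, ?_⟩
        intro y hy
        rw [List.mem_singleton] at hy
        subst hy
        exact (Language.mem_add _ _ _).mpr (Or.inl rfl)
      · rw [← map_range_extWord w₂ s k]
        have : List.range k <+: List.range (w₂.length + k) := by
          rw [Nat.add_comm, List.range_add]
          exact ⟨_, rfl⟩
        exact this.map _
    · rw [← extWord_append]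
      exact hs1
  obtain ⟨y, ⟨t, ht, rfl⟩, hyW⟩ := hsel {w₂} {w₂} K w₁ hne'
  rcases ht with (ht | ht) | ht
  · rwa [limit_star_singleton hne ht] at hyW
  · rwa [limit_star_singleton hne ht] at hyW
  · rw [limit_prefixes ht] at hyW
    exact absurd hyW hs2
end
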